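/- arXiv:2205.10789 — 13 statements merged into one kernel-verified Lean document; each statement's English description precedes it below -/
import Mathlib

section
/- Let F be a non-trivial r-wise t-intersecting family of k-subsets of [n], and let S ⊆ [n] satisfy |S ∩ F_1 ∩ ⋯ ∩ F_{r-1}| ≥ t for all F_1,…,F_{r-1} ∈ F. Then for any A_1,…,A_m ∈ F with m ≤ r-1, we have |S ∩ A_1 ∩ ⋯ ∩ A_m| ≥ r + t - 1 - m. -/
lemma aux_int (n t : ℕ) (F : Finset (Finset (Fin n))) (hne : F.Nonempty)
    (hnontriv : (F.inf id).card < t) :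
    ∀ (s : ℕ) (X : Finset (Fin n)),
      (∀ g : Fin s → Finset (Fin n), (∀ i, g i ∈ F) →
        t ≤ (X ∩ Finset.univ.inf g).card) → t + s ≤ X.card := by
  intro s
  induction s with
  | zero =>
    intro X h
    have := h (fun i => i.elim0) (fun i => i.elim0)
    simpa using this
  | succ s ih =>
    intro X h
    by_cases hcase : ∀ B ∈ F, X ⊆ B
    · exfalso
      obtain ⟨B0, hB0⟩ := hne
      have hX : X ⊆ F.inf id := Finset.le_inf (fun B hB => hcase B hB)
      have h1 : t ≤ X.card := by
        have := h (fun _ => B0) (fun _ => hB0)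
        exact this.trans (Finset.card_le_card (Finset.inter_subset_left))
      have h2 : X.card ≤ (F.inf id).card := Finset.card_le_card hX
      omega
    · push_neg at hcase
      obtain ⟨B, hB, hXB⟩ := hcase
      have hsub : X ∩ B ⊂ X := by
        refine Finset.ssubset_iff_subset_ne.mpr ⟨Finset.inter_subset_left, ?_⟩
        intro heq
        exact hXB (by rw [← heq]; exact Finset.inter_subset_right)
      have hstep : t + s ≤ (X ∩ B).card := by
        apply ih
        intro g hg
        have := h (Fin.cons B g) (by
          intro i
          refine Fin.cases ?_ ?_ i
          · simpa using hB
          · intro j; simpa using hg j)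
        refine this.trans (Finset.card_le_card ?_)
        intro x hx
        simp only [Finset.mem_inter] at hx ⊢
        obtain ⟨hx1, hx2⟩ := hx
        have hB' : x ∈ B := by
          have h0 := Finset.inf_le (f := Fin.cons B g) (Finset.mem_univ (0 : Fin (s+1)))
          simpa using h0 hx2
        refine ⟨⟨hx1, hB'⟩, ?_⟩
        rw [Finset.mem_inf]
        intro j _
        have h0 := Finset.inf_le (f := Fin.cons B g) (Finset.mem_univ (Fin.succ j))
        simpa using h0 hx2
      have := Finset.card_lt_card hsub
      omega

/-- Under the same hypotheses as Statement 0, for any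
`A_1, …, A_m ∈ F` with `m ≤ r - 1` we have `|S ∩ A_1 ∩ ⋯ ∩ A_m| ≥ r + t - 1 - m`. -/
theorem stmt_1 (n r k t m : ℕ) (hn : 0 < n) (hk : 0 < k) (ht : 0 < t) (hr : 2 ≤ r)
    (hm : 0 < m) (hmr : m ≤ r - 1)
    (F : Finset (Finset (Fin n)))
    (hcard : ∀ A ∈ F, A.card = k)
    (hwise : ∀ f : Fin r → Finset (Fin n), (∀ i, f i ∈ F) →
      t ≤ (Finset.univ.inf f).card)
    (hnontriv : (F.inf id).card < t)
    (S : Finset (Fin n))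
    (hS : ∀ f : Fin (r - 1) → Finset (Fin n), (∀ i, f i ∈ F) →
      t ≤ (S ∩ Finset.univ.inf f).card)
    (A : Fin m → Finset (Fin n)) (hA : ∀ i, A i ∈ F) :
    r + t - 1 - m ≤ (S ∩ Finset.univ.inf A).card := by
  have hne : F.Nonempty := ⟨A ⟨0, hm⟩, hA _⟩
  set s := r - 1 - m with hs
  have hms : m + s = r - 1 := by omega
  have key : t + s ≤ (S ∩ Finset.univ.inf A).card := by
    apply aux_int n t F hne hnontriv
    intro g hg
    -- build f : Fin (r-1) from A and g
    have hf : ∀ i : Fin (r - 1), (i : ℕ) < m ∨ ((i : ℕ) - m < s ∧ m ≤ (i : ℕ)) := by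
      intro i; have := i.isLt; omega
    let f : Fin (r - 1) → Finset (Fin n) := fun i =>
      if h : (i : ℕ) < m then A ⟨i, h⟩ else g ⟨(i : ℕ) - m, by have := i.isLt; omega⟩
    have hfF : ∀ i, f i ∈ F := by
      intro i
      by_cases h : (i : ℕ) < m
      · simp only [f, dif_pos h]; exact hA _
      · simp only [f, dif_neg h]; exact hg _
    have := hS f hfF
    refine this.trans (Finset.card_le_card ?_)
    intro x hx
    simp only [Finset.mem_inter] at hx ⊢
    obtain ⟨hx1, hx2⟩ := hx
    have hmem : ∀ i : Fin (r - 1), x ∈ f i := by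
      intro i
      have h0 : Finset.univ.inf f ≤ f i := Finset.inf_le (Finset.mem_univ i)
      exact h0 hx2
    refine ⟨⟨hx1, ?_⟩, ?_⟩
    · rw [Finset.mem_inf]
      intro j _
      have hj : (j : ℕ) < r - 1 := by have := j.isLt; omega
      have := hmem ⟨j, hj⟩
      simpa [f, j.isLt] using this
    · rw [Finset.mem_inf]
      intro j _
      have hj : m + (j : ℕ) < r - 1 := by have := j.isLt; omega
      have := hmem ⟨m + j, hj⟩
      have hnlt : ¬ (m + (j : ℕ) < m) := by omega
      simpa [f, dif_neg hnlt, Nat.add_sub_cancel_left, Fin.eta] using this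
  omega
end

section
/- If r > k - t + 1, then there does not exist a non-trivial r-wise t-intersecting family of k-subsets of [n]. -/
lemma mem_foldr_inter {n : ℕ} (l : List (Finset (Fin n))) (x : Fin n) :
    x ∈ l.foldr (· ∩ ·) Finset.univ ↔ ∀ B ∈ l, x ∈ B := by
  induction l with
  | nil => simp
  | cons a l ih => simp [ih]

/-- If `r > k - t + 1`, there is no non-trivial `r`-wise
`t`-intersecting family of `k`-subsets of `[n]`. -/
theorem stmt_2 (n r k t : ℕ) (hn : 0 < n) (hk : 0 < k) (ht : 0 < t) (hr : 2 ≤ r)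
    (h : (k : ℤ) - t + 1 < r) :
    ¬ ∃ F : Finset (Finset (Fin n)), F.Nonempty ∧ (∀ A ∈ F, A.card = k) ∧
      (∀ f : Fin r → Finset (Fin n), (∀ i, f i ∈ F) →
        t ≤ (Finset.univ.inf f).card) ∧
      (F.inf id).card < t := by
  rintro ⟨F, ⟨A, hA⟩, hcard, hinter, htriv⟩
  -- t ≤ k
  haveI : Nonempty (Fin r) := ⟨⟨0, by omega⟩⟩
  have htk : t ≤ k := by
    have := hinter (fun _ => A) (fun _ => hA)
    rwa [Finset.inf_const (Finset.univ_nonempty), hcard A hA] at this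
  -- key induction
  have key : ∀ m : ℕ, ∃ l : List (Finset (Fin n)), (∀ B ∈ l, B ∈ F) ∧
      l.length = m + 1 ∧
      ((l.foldr (· ∩ ·) Finset.univ).card < t ∨
        (l.foldr (· ∩ ·) Finset.univ).card ≤ k - m) := by
    intro m
    induction m with
    | zero =>
      refine ⟨[A], ?_, rfl, Or.inr ?_⟩
      · simp [hA]
      · simp [hcard A hA]
    | succ m ih =>
      obtain ⟨l, hlF, hlen, hc⟩ := ih
      by_cases hlt : (l.foldr (· ∩ ·) Finset.univ).card < t
      · refine ⟨A :: l, ?_, by simp [hlen], Or.inl ?_⟩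
        · intro B hB; rcases List.mem_cons.1 hB with rfl | hB
          · exact hA
          · exact hlF B hB
        · calc ((A :: l).foldr (· ∩ ·) Finset.univ).card
              ≤ (l.foldr (· ∩ ·) Finset.univ).card := by
                apply Finset.card_le_card
                intro x hx
                rw [mem_foldr_inter] at hx ⊢
                intro B hB; exact hx B (List.mem_cons_of_mem _ hB)
            _ < t := hlt
      · -- intersection still has card ≥ t; find B cutting it down
        have hI : t ≤ (l.foldr (· ∩ ·) Finset.univ).card := le_of_not_gt hlt
        have hcm : (l.foldr (· ∩ ·) Finset.univ).card ≤ k - m := hc.resolve_left hlt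
        have : ∃ B ∈ F, ¬ (l.foldr (· ∩ ·) Finset.univ) ⊆ B := by
          by_contra hcon
          push_neg at hcon
          have : (l.foldr (· ∩ ·) Finset.univ) ≤ F.inf id := by
            apply Finset.le_inf
            intro B hB; exact hcon B hB
          have := Finset.card_le_card this
          omega
        obtain ⟨B, hBF, hBsub⟩ := this
        refine ⟨B :: l, ?_, by simp [hlen], Or.inr ?_⟩
        · intro C hC; rcases List.mem_cons.1 hC with rfl | hC
          · exact hBF
          · exact hlF C hC
        · have hss : (B :: l).foldr (· ∩ ·) Finset.univ ⊂
              l.foldr (· ∩ ·) Finset.univ := by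
            rw [show (B :: l).foldr (· ∩ ·) Finset.univ
              = B ∩ l.foldr (· ∩ ·) Finset.univ from rfl]
            constructor
            · exact Finset.inter_subset_right
            · intro hsub
              exact hBsub fun x hx => (Finset.mem_inter.1 (hsub hx)).1
          have := Finset.card_lt_card hss
          omega
  obtain ⟨l, hlF, hlen, hc⟩ := key (k - t + 1)
  have hcl : (l.foldr (· ∩ ·) Finset.univ).card < t := by
    rcases hc with h1 | h2
    · exact h1
    · omega
  have hlr : l.length ≤ r := by
    rw [hlen]; omega
  set f : Fin r → Finset (Fin n) := fun i => l.getD i A with hf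
  have hfF : ∀ i, f i ∈ F := by
    intro i
    by_cases hi : (i : ℕ) < l.length
    · rw [hf]; simp only
      rw [List.getD_eq_getElem _ _ hi]
      exact hlF _ (List.getElem_mem _)
    · rw [hf]; simp only
      rw [List.getD_eq_default _ _ (le_of_not_gt hi)]
      exact hA
  have hsub : Finset.univ.inf f ⊆ l.foldr (· ∩ ·) Finset.univ := by
    intro x hx
    rw [mem_foldr_inter]
    intro B hB
    obtain ⟨j, hjB⟩ := List.mem_iff_getElem.1 hB
    obtain ⟨hj, hjB⟩ := hjB
    have hjr : j < r := lt_of_lt_of_le hj hlr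
    have : Finset.univ.inf f ≤ f ⟨j, hjr⟩ := Finset.inf_le (Finset.mem_univ _)
    have hfB : f ⟨j, hjr⟩ = B := by
      rw [hf]; simp only
      rw [List.getD_eq_getElem _ _ (by simpa using hj)]
      simpa using hjB
    rw [hfB] at this
    exact this hx
  have := hinter f hfF
  have := Finset.card_le_card hsub
  omega
end

section
/- Let F be a non-trivial r-wise t-intersecting family of k-subsets of [n]. If B_1, B_2, …, B_d ∈ F with d ≤ r, then |B_1 ∩ B_2 ∩ ⋯ ∩ B_d| ≥ t + r - d. In particular, F is a (t+r-2)-intersecting family. -/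
open Finset

lemma inf_comp_surj {α : Type*} [Lattice α] [OrderTop α] {a b : ℕ}
    (σ : Fin a → Fin b) (hσ : Function.Surjective σ) (g : Fin b → α) :
    Finset.univ.inf (g ∘ σ) = Finset.univ.inf g := by
  apply le_antisymm
  · exact Finset.le_inf fun j _ => by
      obtain ⟨i, rfl⟩ := hσ j
      exact Finset.inf_le (Finset.mem_univ i)
  · exact Finset.le_inf fun i _ => Finset.inf_le (Finset.mem_univ (σ i))

lemma inf_univ_cons {α : Type*} [Lattice α] [OrderTop α] {m : ℕ}
    (A : α) (g : Fin m → α) :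
    Finset.univ.inf (Fin.cons A g : Fin (m + 1) → α) = A ⊓ Finset.univ.inf g := by
  rw [Fin.univ_succ]; rw [Finset.cons_eq_insert, Finset.inf_insert, Finset.inf_map]
  simp [Function.comp_def]

/-- In a non-trivial `r`-wise `t`-intersecting family, any `d ≤ r`
members intersect in at least `t + r - d` elements; in particular the family is
`(t + r - 2)`-intersecting. -/
theorem stmt_3 (n r k t d : ℕ) (hn : 0 < n) (hk : 0 < k) (ht : 0 < t) (hr : 2 ≤ r)
    (hd : 0 < d) (hdr : d ≤ r)
    (F : Finset (Finset (Fin n)))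
    (hcard : ∀ A ∈ F, A.card = k)
    (hwise : ∀ f : Fin r → Finset (Fin n), (∀ i, f i ∈ F) →
      t ≤ (Finset.univ.inf f).card)
    (hnontriv : (F.inf id).card < t)
    (B : Fin d → Finset (Fin n)) (hB : ∀ i, B i ∈ F) :
    t + r - d ≤ (Finset.univ.inf B).card ∧
      ∀ A ∈ F, ∀ A' ∈ F, t + r - 2 ≤ (A ∩ A').card := by
  -- padding: any family indexed by m (0 < m ≤ r) can be reindexed surjectively from Fin r
  have pad : ∀ m, 0 < m → m ≤ r → ∀ g : Fin m → Finset (Fin n), (∀ i, g i ∈ F) →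
      t ≤ (Finset.univ.inf g).card := by
    intro m hm hmr g hg
    have h0 : (0 : ℕ) < m := hm
    set σ : Fin r → Fin m := fun i => if h : (i : ℕ) < m then ⟨i, h⟩ else ⟨0, h0⟩ with hσdef
    have hσ : Function.Surjective σ := by
      intro j
      refine ⟨⟨j, lt_of_lt_of_le j.2 hmr⟩, ?_⟩
      simp [σ, j.2]
    have := hwise (g ∘ σ) (fun i => hg _)
    rwa [inf_comp_surj σ hσ g] at this
  have key : ∀ c m, 0 < m → m + c = r → ∀ g : Fin m → Finset (Fin n), (∀ i, g i ∈ F) →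
      t + c ≤ (Finset.univ.inf g).card := by
    intro c
    induction c with
    | zero => intro m hm hmr g hg; simpa using pad m hm (by omega) g hg
    | succ c ih =>
      intro m hm hmr g hg
      set S := Finset.univ.inf g with hS
      by_cases hall : ∀ A ∈ F, S ⊆ A
      · have h1 : S ≤ F.inf id := Finset.le_inf fun A hA => hall A hA
        have h2 : S.card ≤ (F.inf id).card := Finset.card_le_card h1
        have h3 := pad m hm (by omega) g hg
        rw [← hS] at h3
        omega
      · push_neg at hall
        obtain ⟨A, hA, hSA⟩ := hall
        have hg' : ∀ i, (Fin.cons A g : Fin (m+1) → Finset (Fin n)) i ∈ F := by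
          intro i
          refine Fin.cases ?_ ?_ i
          · exact hA
          · intro j; exact hg j
        have h4 := ih (m + 1) (by omega) (by omega) (Fin.cons A g) hg'
        rw [inf_univ_cons, ← hS] at h4
        have hss : A ⊓ S ⊂ S := by
          refine Finset.ssubset_iff_subset_ne.2 ⟨Finset.inter_subset_right, ?_⟩
          intro h
          exact hSA (by rw [← h]; exact Finset.inter_subset_left)
        have := Finset.card_lt_card hss
        omega
  constructor
  · have := key (r - d) d hd (by omega) B hB
    omega
  · intro A hA A' hA'
    have hg : ∀ i, (![A, A'] : Fin 2 → Finset (Fin n)) i ∈ F := by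
      intro i; fin_cases i <;> assumption
    have := key (r - 2) 2 (by omega) (by omega) ![A, A'] hg
    have heq : (Finset.univ.inf ![A, A'] : Finset (Fin n)) = A ∩ A' := by
      have : (![A, A'] : Fin 2 → Finset (Fin n)) = Fin.cons A (fun _ => A') := by
        funext i; fin_cases i <;> rfl
      rw [this, inf_univ_cons]
      simp
    rw [heq] at this
    omega
end

section
/- Let n ≥ 2k, k > t+r-2, M a (k+1)-subset of [n], and X a (t+r-2)-subset of M. Then the family H(k, t+r-1, X, M) = { H ∈ binom([n],k) : X ⊆ H and |H ∩ M| ≥ t+r-1 } ∪ binom(M,k) is a non-trivial r-wise t-intersecting family. -/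
open Finset

lemma key6 {α : Type*} [DecidableEq α] [Fintype α] {r : ℕ}
    (f g : Fin r → Finset α) (B : Finset α)
    (h : ∀ i, B \ g i ⊆ f i) :
    B.card ≤ (Finset.univ.inf f).card + ∑ i, (g i).card := by
  set U := Finset.univ.biUnion g with hU
  have hsub : B \ U ⊆ Finset.univ.inf f :=
    Finset.le_inf fun i _ =>
      (Finset.sdiff_subset_sdiff Finset.Subset.rfl
        (Finset.subset_biUnion_of_mem g (Finset.mem_univ i))).trans (h i)
  have h1 : B.card ≤ (B \ U).card + U.card := by
    have := Finset.card_sdiff_add_card B U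
    have h2 : B.card ≤ (B ∪ U).card := Finset.card_le_card Finset.subset_union_left
    omega
  have h3 : (B \ U).card ≤ (Finset.univ.inf f).card := Finset.card_le_card hsub
  have h4 : U.card ≤ ∑ i, (g i).card := Finset.card_biUnion_le
  omega

/-- For `n ≥ 2k`, `k > t + r - 2`, a `(k+1)`-subset `M` of `[n]` and a
`(t+r-2)`-subset `X ⊆ M`, the family
`H(k, t+r-1, X, M) = {H ∈ binom([n],k) : X ⊆ H, |H ∩ M| ≥ t+r-1} ∪ binom(M,k)`
is a non-trivial `r`-wise `t`-intersecting family. -/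
theorem stmt_6 (n r k t : ℕ) (hn0 : 0 < n) (ht : 0 < t) (hr : 2 ≤ r)
    (hn : 2 * k ≤ n) (hk : t + r - 2 < k)
    (M : Finset (Fin n)) (hM : M.card = k + 1)
    (X : Finset (Fin n)) (hXM : X ⊆ M) (hX : X.card = t + r - 2) :
    (∀ f : Fin r → Finset (Fin n),
      (∀ i, f i ∈ (Finset.univ.powersetCard k).filter
          (fun H => X ⊆ H ∧ t + r - 1 ≤ (H ∩ M).card) ∪ M.powersetCard k) →
      t ≤ (Finset.univ.inf f).card) ∧
    ((((Finset.univ.powersetCard k).filter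
        (fun H => X ⊆ H ∧ t + r - 1 ≤ (H ∩ M).card) ∪ M.powersetCard k).inf id).card
      < t) := by
  constructor
  · intro f hf
    have hall : ∀ i, (X ⊆ f i ∧ t + r - 1 ≤ (f i ∩ M).card) ∨
        ((M \ f i).card ≤ 1 ∧ t + r - 1 ≤ (f i ∩ M).card) := by
      intro i
      rcases Finset.mem_union.mp (hf i) with h | h
      · exact Or.inl (Finset.mem_filter.mp h).2
      · obtain ⟨hsub, hcard⟩ := Finset.mem_powersetCard.mp h
        refine Or.inr ⟨?_, ?_⟩
        · rw [Finset.card_sdiff_of_subset hsub, hcard, hM]; omega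
        · rw [Finset.inter_eq_left.mpr hsub, hcard]; omega
    have hcM : ∀ i, t + r - 1 ≤ (f i ∩ M).card := fun i => (hall i).elim And.right And.right
    by_cases h2 : ∃ i j : Fin r, i ≠ j ∧ X ⊆ f i ∧ X ⊆ f j
    · obtain ⟨i0, j0, hij, hi, hj⟩ := h2
      set g : Fin r → Finset (Fin n) := fun i => if X ⊆ f i then ∅ else M \ f i with hg
      have hkey := key6 f g X (by
        intro i
        by_cases hXi : X ⊆ f i
        · simpa [hg, hXi] using hXi
        · simp only [hg, if_neg hXi]
          intro x hx
          rw [Finset.mem_sdiff, Finset.mem_sdiff] at hx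
          rcases hx with ⟨hxX, hxn⟩
          by_contra hxf
          exact hxn ⟨hXM hxX, hxf⟩)
      have hg1 : ∀ i, (g i).card ≤ 1 := by
        intro i
        by_cases hXi : X ⊆ f i
        · simp [hg, hXi]
        · simp only [hg, if_neg hXi]
          rcases hall i with ⟨hL, _⟩ | ⟨hR, _⟩
          · exact absurd hL hXi
          · exact hR
      have hsum : ∑ i, (g i).card ≤ r - 2 := by
        have h0 : ∀ x ∈ (Finset.univ : Finset (Fin r)),
            x ∉ Finset.univ \ {i0, j0} → (g x).card = 0 := by
          intro x _ hx
          simp only [Finset.mem_sdiff, Finset.mem_univ, true_and, not_not,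
            Finset.mem_insert, Finset.mem_singleton] at hx
          rcases hx with h | h <;> subst h <;> simp [hg, hi, hj]
        calc ∑ i, (g i).card
            = ∑ i ∈ Finset.univ \ {i0, j0}, (g i).card :=
              (Finset.sum_subset (Finset.sdiff_subset) h0).symm
          _ ≤ ∑ i ∈ Finset.univ \ {i0, j0}, 1 :=
              Finset.sum_le_sum (fun i _ => hg1 i)
          _ = (Finset.univ \ {i0, j0}).card := by simp
          _ ≤ r - 2 := by
              rw [Finset.card_sdiff_of_subset (Finset.subset_univ _)]
              simp [Finset.card_insert_of_notMem, Finset.mem_singleton, hij]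
      rw [hX] at hkey
      omega
    · by_cases h1 : ∃ i, X ⊆ f i
      · obtain ⟨i0, hi0⟩ := h1
        have hother : ∀ j, j ≠ i0 → (M \ f j).card ≤ 1 := by
          intro j hj
          rcases hall j with ⟨hL, _⟩ | ⟨hR, _⟩
          · exact absurd ⟨j, i0, hj, hL, hi0⟩ h2
          · exact hR
        set g : Fin r → Finset (Fin n) := fun i => if i = i0 then ∅ else M \ f i with hg
        have hkey := key6 f g (f i0 ∩ M) (by
          intro i
          by_cases hii : i = i0
          · subst hii
            simp only [hg, if_pos rfl, Finset.sdiff_empty]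
            exact Finset.inter_subset_left
          · simp only [hg, if_neg hii]
            intro x hx
            rw [Finset.mem_sdiff, Finset.mem_inter, Finset.mem_sdiff] at hx
            rcases hx with ⟨⟨_, hxM⟩, hxn⟩
            by_contra hxf
            exact hxn ⟨hxM, hxf⟩)
        have hsum : ∑ i, (g i).card ≤ r - 1 := by
          have h0 : ∀ x ∈ (Finset.univ : Finset (Fin r)),
              x ∉ Finset.univ \ {i0} → (g x).card = 0 := by
            intro x _ hx
            simp only [Finset.mem_sdiff, Finset.mem_univ, true_and, not_not,
              Finset.mem_singleton] at hx
            subst hx; simp [hg]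
          calc ∑ i, (g i).card
              = ∑ i ∈ Finset.univ \ {i0}, (g i).card :=
                (Finset.sum_subset (Finset.sdiff_subset) h0).symm
            _ ≤ ∑ i ∈ Finset.univ \ {i0}, 1 := by
                refine Finset.sum_le_sum (fun i hii => ?_)
                simp only [Finset.mem_sdiff, Finset.mem_singleton] at hii
                simp only [hg, if_neg hii.2]
                exact hother i hii.2
            _ = (Finset.univ \ {i0}).card := by simp
            _ ≤ r - 1 := by
                rw [Finset.card_sdiff_of_subset (Finset.subset_univ _)]
                simp
        have hB := hcM i0
        omega
      · have hall1 : ∀ i, (M \ f i).card ≤ 1 := by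
          intro i
          rcases hall i with ⟨hL, _⟩ | ⟨hR, _⟩
          · exact absurd ⟨i, hL⟩ h1
          · exact hR
        set g : Fin r → Finset (Fin n) := fun i => M \ f i with hg
        have hkey := key6 f g M (by
          intro i
          simp only [hg]
          rw [Finset.sdiff_sdiff_self_left]
          exact Finset.inter_subset_right)
        have hsum : ∑ i, (g i).card ≤ r := by
          calc ∑ i, (g i).card ≤ ∑ _i : Fin r, 1 :=
                Finset.sum_le_sum (fun i _ => hall1 i)
            _ = r := by simp
        rw [hM] at hkey
        omega
  · set F := (Finset.univ.powersetCard k).filter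
        (fun H => X ⊆ H ∧ t + r - 1 ≤ (H ∩ M).card) ∪ M.powersetCard k with hF
    have hmem : ∀ x ∈ M, M.erase x ∈ F := by
      intro x hx
      refine Finset.mem_union_right _ (Finset.mem_powersetCard.mpr ⟨Finset.erase_subset _ _, ?_⟩)
      rw [Finset.card_erase_of_mem hx, hM]; omega
    have hinf : ∀ x ∈ M, F.inf id ⊆ M.erase x := by
      intro x hx
      exact Finset.inf_le (f := id) (hmem x hx)
    have hempty : F.inf id = ∅ := by
      rw [Finset.eq_empty_iff_forall_notMem]
      intro y hy
      have hyM : y ∈ M := by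
        obtain ⟨x0, hx0⟩ : M.Nonempty := by
          rw [← Finset.card_pos, hM]; omega
        exact Finset.mem_of_mem_erase (hinf x0 hx0 hy)
      exact (Finset.notMem_erase y M) (hinf y hyM hy)
    rw [hempty]
    simpa using ht
end

section
/- Let k = t + r - 1 and n ≥ k+1, with r ≥ 2. If F is a maximal non-trivial r-wise t-intersecting family of k-subsets of [n], then F = binom(M,k) for some (k+1)-subset M of [n]. -/
open Finset

/-- Intersection of sets that each cover all but at most one element of `M`
misses at most `s.card` elements of `M`. -/
lemma inf_card_bound {α ι : Type*} [DecidableEq α] [Fintype α]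
    (M : Finset α) (s : Finset ι) (f : ι → Finset α)
    (h : ∀ i ∈ s, f i ⊆ M ∧ M.card ≤ (f i).card + 1) :
    M.card ≤ (M ∩ s.inf f).card + s.card := by
  induction s using Finset.cons_induction with
  | empty => simp [Finset.inf_empty, Finset.top_eq_univ]
  | cons a s ha ih =>
    rw [Finset.inf_cons, Finset.card_cons]
    have hfa := h a (Finset.mem_cons_self a s)
    have ih' := ih (fun i hi => h i (Finset.mem_cons_of_mem hi))
    have hkey := Finset.card_inter_add_card_union (f a) (M ∩ s.inf f)
    have hU : (f a ∪ (M ∩ s.inf f)).card ≤ M.card :=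
      Finset.card_le_card (Finset.union_subset hfa.1 Finset.inter_subset_left)
    have heq : M ∩ (f a ⊓ s.inf f) = f a ∩ (M ∩ s.inf f) := by
      rw [Finset.inf_eq_inter, Finset.inter_left_comm]
    rw [heq]
    omega

/-- For `k = t + r - 1` and `n ≥ k + 1`, every maximal non-trivial
`r`-wise `t`-intersecting family of `k`-subsets of `[n]` equals `binom(M, k)` for
some `(k+1)`-subset `M` of `[n]`. -/
theorem stmt_7 (n r k t : ℕ) (hn0 : 0 < n) (ht : 0 < t) (hr : 2 ≤ r)
    (hk : k = t + r - 1) (hn : k + 1 ≤ n)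
    (F : Finset (Finset (Fin n)))
    (hcard : ∀ A ∈ F, A.card = k)
    (hwise : ∀ f : Fin r → Finset (Fin n), (∀ i, f i ∈ F) →
      t ≤ (Finset.univ.inf f).card)
    (hnontriv : (F.inf id).card < t)
    (hmax : ∀ A : Finset (Fin n), A.card = k → A ∉ F →
      ¬ (∀ f : Fin r → Finset (Fin n), (∀ i, f i ∈ insert A F) →
        t ≤ (Finset.univ.inf f).card)) :
    ∃ M : Finset (Fin n), M.card = k + 1 ∧ F = M.powersetCard k := by
  classical
  have hFne : F.Nonempty := by
    rcases F.eq_empty_or_nonempty with h | h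
    · exfalso; subst h
      simp only [Finset.inf_empty] at hnontriv
      rw [Finset.top_eq_univ, Finset.card_univ, Fintype.card_fin] at hnontriv
      omega
    · exact h
  -- key lemma: j sets of F (1 ≤ j ≤ r) intersect in at least t + r - j elements
  have key : ∀ m j, j + m = r → 1 ≤ j → ∀ g : Fin j → Finset (Fin n),
      (∀ i, g i ∈ F) → (Finset.univ.inf g).card + j + 1 ≤ t + r → False := by
    intro m
    induction m with
    | zero =>
      intro j hj hj1 g hg hcg
      have hjr : j = r := by omega
      subst hjr
      have := hwise g hg
      omega
    | succ m ih =>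
      intro j hj hj1 g hg hcg
      by_cases hex : ∃ B ∈ F, ¬ Finset.univ.inf g ⊆ B
      · obtain ⟨B, hB, hXB⟩ := hex
        refine ih (j+1) (by omega) (by omega)
          (fun i => if h : (i : ℕ) < j then g ⟨i, h⟩ else B) ?_ ?_
        · intro i; split
          · exact hg _
          · exact hB
        · have hsub : Finset.univ.inf
              (fun i : Fin (j+1) => if h : (i : ℕ) < j then g ⟨i, h⟩ else B)
              ⊆ Finset.univ.inf g ∩ B := by
            apply Finset.subset_inter
            · refine Finset.le_inf (α := Finset (Fin n)) fun i _ => ?_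
              have h1 : ((⟨(i : ℕ), by omega⟩ : Fin (j+1)) : ℕ) < j := i.isLt
              have h2 := Finset.inf_le
                (f := fun i : Fin (j+1) => if h : (i : ℕ) < j then g ⟨i, h⟩ else B)
                (Finset.mem_univ (⟨(i : ℕ), by omega⟩ : Fin (j+1)))
              simpa [h1] using h2
            · have h2 := Finset.inf_le
                (f := fun i : Fin (j+1) => if h : (i : ℕ) < j then g ⟨i, h⟩ else B)
                (Finset.mem_univ (⟨j, by omega⟩ : Fin (j+1)))
              simpa using h2
          obtain ⟨x, hxX, hxB⟩ := Finset.not_subset.mp hXB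
          have herase : Finset.univ.inf g ∩ B ⊆ (Finset.univ.inf g).erase x := by
            intro y hy
            rcases Finset.mem_inter.mp hy with ⟨hy1, hy2⟩
            exact Finset.mem_erase.mpr ⟨fun h => hxB (h ▸ hy2), hy1⟩
          have h3 := Finset.card_le_card hsub
          have h4 := Finset.card_le_card herase
          rw [Finset.card_erase_of_mem hxX] at h4
          have h5 : 1 ≤ (Finset.univ.inf g).card := Finset.card_pos.mpr ⟨x, hxX⟩
          omega
      · push_neg at hex
        have hXsub : Finset.univ.inf g ⊆ F.inf id :=
          Finset.le_inf (fun b hb => hex b hb)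
        have hXt : (Finset.univ.inf g).card < t :=
          lt_of_le_of_lt (Finset.card_le_card hXsub) hnontriv
        set f : Fin r → Finset (Fin n) :=
          fun i => g ⟨min (i : ℕ) (j-1), by omega⟩ with hf
        have hfF : ∀ i, f i ∈ F := fun i => hg _
        have hwf := hwise f hfF
        have hfsub : Finset.univ.inf f ⊆ Finset.univ.inf g := by
          refine Finset.le_inf (α := Finset (Fin n)) fun i _ => ?_
          have hir : (i : ℕ) < r := by omega
          have h2 := Finset.inf_le (f := f) (Finset.mem_univ (⟨(i : ℕ), hir⟩ : Fin r))
          have heq : f ⟨(i : ℕ), hir⟩ = g i := by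
            show g _ = g i
            congr 1
            apply Fin.ext
            show min (i : ℕ) (j - 1) = (i : ℕ)
            have := i.isLt
            omega
          rwa [heq] at h2
        have := Finset.card_le_card hfsub
        omega
  -- pairwise intersections have size ≥ k - 1
  have pair : ∀ A ∈ F, ∀ B ∈ F, k ≤ (A ∩ B).card + 1 := by
    intro A hA B hB
    by_contra hcon
    push_neg at hcon
    refine key (r - 2) 2 (by omega) (by omega)
      (fun i => if (i : ℕ) = 0 then A else B) ?_ ?_
    · intro i; split
      · exact hA
      · exact hB
    · have h0 : (Finset.univ.inf fun i : Fin 2 => if (i : ℕ) = 0 then A else B) ⊆ A := by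
        simpa using Finset.inf_le (f := fun i : Fin 2 => if (i : ℕ) = 0 then A else B)
          (Finset.mem_univ (0 : Fin 2))
      have h1 : (Finset.univ.inf fun i : Fin 2 => if (i : ℕ) = 0 then A else B) ⊆ B := by
        simpa using Finset.inf_le (f := fun i : Fin 2 => if (i : ℕ) = 0 then A else B)
          (Finset.mem_univ (1 : Fin 2))
      have := Finset.card_le_card (Finset.subset_inter h0 h1)
      omega
  -- find two distinct members
  obtain ⟨A, hA⟩ := hFne
  have hAk := hcard A hA
  have hex2 : ∃ B ∈ F, B ≠ A := by
    by_contra hcon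
    push_neg at hcon
    have hsub : A ⊆ F.inf id := Finset.le_inf (fun b hb => by simp [hcon b hb])
    have := Finset.card_le_card hsub
    omega
  obtain ⟨B, hB, hBA⟩ := hex2
  have hBk := hcard B hB
  have hABne : A ≠ B := fun h => hBA h.symm
  have hABle : (A ∩ B).card + 1 ≤ k := by
    by_contra hcon
    push_neg at hcon
    have hle : (A ∩ B).card ≤ A.card := Finset.card_le_card Finset.inter_subset_left
    have heq1 : A ∩ B = A := Finset.eq_of_subset_of_card_le Finset.inter_subset_left (by omega)
    have hAB : A ⊆ B := by rw [← heq1]; exact Finset.inter_subset_right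
    exact hABne (Finset.eq_of_subset_of_card_le hAB (by omega))
  have hABeq : (A ∩ B).card + 1 = k := by
    have := pair A hA B hB; omega
  have hMcard : (A ∪ B).card = k + 1 := by
    have := Finset.card_inter_add_card_union A B
    omega
  set M := A ∪ B with hMdef
  set S := A ∩ B with hSdef
  by_cases hall : ∀ C ∈ F, C ⊆ M
  · refine ⟨M, hMcard, ?_⟩
    apply Finset.Subset.antisymm
    · intro D hD
      exact Finset.mem_powersetCard.mpr ⟨hall D hD, hcard D hD⟩
    · intro D hD
      rw [Finset.mem_powersetCard] at hD
      by_contra hDF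
      refine hmax D hD.2 hDF ?_
      intro f hf
      have hmem : ∀ i, f i ⊆ M ∧ M.card ≤ (f i).card + 1 := by
        intro i
        rcases Finset.mem_insert.mp (hf i) with h | h
        · rw [h]; exact ⟨hD.1, by rw [hD.2, hMcard]⟩
        · exact ⟨hall _ h, by rw [hcard _ h, hMcard]⟩
      have hb := inf_card_bound M Finset.univ f (fun i _ => hmem i)
      have hcu : (Finset.univ : Finset (Fin r)).card = r := by simp
      have hsub : (M ∩ Finset.univ.inf f).card ≤ (Finset.univ.inf f).card :=
        Finset.card_le_card Finset.inter_subset_right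
      omega
  · exfalso
    push_neg at hall
    obtain ⟨C, hC, hCM⟩ := hall
    have hout : ∀ C' ∈ F, ¬ C' ⊆ M → C' ∩ M = S := by
      intro C' hC' hC'M
      obtain ⟨c, hcC, hcM⟩ := Finset.not_subset.mp hC'M
      have hCk := hcard C' hC'
      have h1 : C' ∩ M ⊆ C'.erase c := by
        intro x hx
        rcases Finset.mem_inter.mp hx with ⟨hx1, hx2⟩
        exact Finset.mem_erase.mpr ⟨fun h => hcM (h ▸ hx2), hx1⟩
      have h2 : (C' ∩ M).card + 1 ≤ k := by
        have := Finset.card_le_card h1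
        rw [Finset.card_erase_of_mem hcC, hCk] at this
        omega
      have hpA := pair C' hC' A hA
      have hpB := pair C' hC' B hB
      have hsubA : C' ∩ A ⊆ C' ∩ M :=
        Finset.inter_subset_inter (Finset.Subset.refl _) Finset.subset_union_left
      have hsubB : C' ∩ B ⊆ C' ∩ M :=
        Finset.inter_subset_inter (Finset.Subset.refl _) Finset.subset_union_right
      have heqA : C' ∩ A = C' ∩ M :=
        Finset.eq_of_subset_of_card_le hsubA (by omega)
      have heqB : C' ∩ B = C' ∩ M :=
        Finset.eq_of_subset_of_card_le hsubB (by omega)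
      have hsubS : C' ∩ M ⊆ S := by
        rw [hSdef]
        apply Finset.subset_inter
        · rw [← heqA]; exact Finset.inter_subset_right
        · rw [← heqB]; exact Finset.inter_subset_right
      rw [heqA] at hpA
      exact Finset.eq_of_subset_of_card_le hsubS (by omega)
    have hSall : ∀ D ∈ F, S ⊆ D := by
      intro D hD
      by_cases hDM : D ⊆ M
      · have hpC := pair D hD C hC
        have hCMeq := hout C hC hCM
        have hDCsub : D ∩ C ⊆ S := by
          intro x hx
          rcases Finset.mem_inter.mp hx with ⟨hx1, hx2⟩
          rw [← hCMeq]
          exact Finset.mem_inter.mpr ⟨hx2, hDM hx1⟩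
        have hle := Finset.card_le_card hDCsub
        have heq : D ∩ C = S := Finset.eq_of_subset_of_card_le hDCsub (by omega)
        rw [← heq]
        exact Finset.inter_subset_left
      · have := hout D hD hDM
        rw [← this]
        exact Finset.inter_subset_left
    have hSinf : S ⊆ F.inf id := Finset.le_inf (fun b hb => hSall b hb)
    have := Finset.card_le_card hSinf
    omega
end

section
/- Let F ⊆ binom([n],k) and G ⊆ binom([n],ℓ) be maximal cross t-intersecting families with n ≥ 2(k-t-1)(ℓ+1-t)+t+1, τ_t(F) = t with t-cover X of size t, and τ_t(G) = t+1. Then for each F ∈ F and each G ∈ G with X ⊄ G: X ⊆ F, |G ∩ X| = t-1, and |F ∩ (G ∪ X)| ≥ t+1. -/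
/-- Maximal cross `t`-intersecting families with `τ_t(F) = t`
(witnessed by a `t`-cover `X` of size `t`) and `τ_t(G) = t + 1`: for `F ∈ F` and
`G ∈ G` with `X ⊄ G` we get `X ⊆ F`, `|G ∩ X| = t - 1` and
`|F ∩ (G ∪ X)| ≥ t + 1`. -/
theorem stmt_9 (n k ℓ t : ℕ) (hk : 0 < k) (hl : 0 < ℓ) (ht : 0 < t)
    (hn : 2 * (k - t - 1) * (ℓ + 1 - t) + t + 1 ≤ n)
    (F G : Finset (Finset (Fin n)))
    (hF : ∀ A ∈ F, A.card = k) (hG : ∀ B ∈ G, B.card = ℓ)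
    (hcross : ∀ A ∈ F, ∀ B ∈ G, t ≤ (A ∩ B).card)
    (hmax : ∀ F' G' : Finset (Finset (Fin n)),
      (∀ A ∈ F', A.card = k) → (∀ B ∈ G', B.card = ℓ) →
      F ⊆ F' → G ⊆ G' →
      (∀ A ∈ F', ∀ B ∈ G', t ≤ (A ∩ B).card) → F' = F ∧ G' = G)
    (X : Finset (Fin n)) (hX : X.card = t)
    (hXcov : ∀ A ∈ F, t ≤ (X ∩ A).card)
    (htauF : IsLeast {c | ∃ T : Finset (Fin n),
      (∀ A ∈ F, t ≤ (T ∩ A).card) ∧ T.card = c} t)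
    (htauG : IsLeast {c | ∃ T : Finset (Fin n),
      (∀ B ∈ G, t ≤ (T ∩ B).card) ∧ T.card = c} (t + 1)) :
    ∀ A ∈ F, ∀ B ∈ G, ¬ X ⊆ B →
      X ⊆ A ∧ (B ∩ X).card = t - 1 ∧ t + 1 ≤ (A ∩ (B ∪ X)).card := by
  classical
  -- X is contained in every member of F
  have hXA : ∀ A ∈ F, X ⊆ A := by
    intro A hA
    have h1 : X ∩ A = X := by
      apply Finset.eq_of_subset_of_card_le Finset.inter_subset_left
      rw [hX]; exact hXcov A hA
    exact Finset.inter_eq_left.mp h1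
  -- every ℓ-set containing X belongs to G, by maximality
  have hstar : ∀ B' : Finset (Fin n), B'.card = ℓ → X ⊆ B' → B' ∈ G := by
    intro B' hcard hXB'
    have h := hmax F (insert B' G) hF
      (by
        intro B hB
        rcases Finset.mem_insert.mp hB with h | h
        · rw [h]; exact hcard
        · exact hG B h)
      Finset.Subset.rfl (Finset.subset_insert _ _)
      (by
        intro A hA B hB
        rcases Finset.mem_insert.mp hB with h | h
        · subst h
          have hXsub : X ⊆ A ∩ B := Finset.subset_inter (hXA A hA) hXB'
          calc t = X.card := hX.symm
            _ ≤ (A ∩ B).card := Finset.card_le_card hXsub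
        · exact hcross A hA B h)
    rw [← h.2]
    exact Finset.mem_insert_self _ _
  -- ℓ ≤ n
  have hln : ℓ ≤ n := by
    by_cases hGe : G.Nonempty
    · obtain ⟨B, hB⟩ := hGe
      have := Finset.card_le_univ B
      rwa [hG B hB, Fintype.card_fin] at this
    · exfalso
      have h0 : (0 : ℕ) ∈ {c | ∃ T : Finset (Fin n),
          (∀ B ∈ G, t ≤ (T ∩ B).card) ∧ T.card = c} := by
        refine ⟨∅, ?_, Finset.card_empty⟩
        intro B hB
        exact absurd ⟨B, hB⟩ hGe
      have := htauG.2 h0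
      omega
  -- t ≤ ℓ
  have htl : t ≤ ℓ := by
    have hFne : F.Nonempty := by
      by_contra hFe
      have h0 : (0 : ℕ) ∈ {c | ∃ T : Finset (Fin n),
          (∀ A ∈ F, t ≤ (T ∩ A).card) ∧ T.card = c} := by
        refine ⟨∅, ?_, Finset.card_empty⟩
        intro A hA
        exact absurd ⟨A, hA⟩ hFe
      have := htauF.2 h0
      omega
    have hGne : G.Nonempty := by
      by_contra hGe
      have h0 : (0 : ℕ) ∈ {c | ∃ T : Finset (Fin n),
          (∀ B ∈ G, t ≤ (T ∩ B).card) ∧ T.card = c} := by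
        refine ⟨∅, ?_, Finset.card_empty⟩
        intro B hB
        exact absurd ⟨B, hB⟩ hGe
      have := htauG.2 h0
      omega
    obtain ⟨A₀, hA₀⟩ := hFne
    obtain ⟨B₀, hB₀⟩ := hGne
    calc t ≤ (A₀ ∩ B₀).card := hcross A₀ hA₀ B₀ hB₀
      _ ≤ B₀.card := Finset.card_le_card Finset.inter_subset_right
      _ = ℓ := hG B₀ hB₀
  -- key lemma: every member of G meets X in at least t-1 points
  have hL : ∀ B ∈ G, t - 1 ≤ (X ∩ B).card := by
    intro B hB
    by_cases hn2 : n ≤ ℓ + 1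
    · -- B misses at most one point of the ground set
      have h1 : X \ B ⊆ Finset.univ \ B := Finset.sdiff_subset_sdiff (Finset.subset_univ X) le_rfl
      have h2 : (Finset.univ \ B).card = n - ℓ := by
        rw [Finset.card_sdiff_of_subset (Finset.subset_univ B), Finset.card_univ, Fintype.card_fin, hG B hB]
      have h3 : (X ∩ B).card + (X \ B).card = X.card := Finset.card_inter_add_card_sdiff X B
      have h4 : (X \ B).card ≤ n - ℓ := h2 ▸ Finset.card_le_card h1
      omega
    · -- n ≥ ℓ + 2 : the minimum t-cover T₁ of G must contain X
      obtain ⟨T₁, hT₁cov, hT₁card⟩ := htauG.1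
      set R : Finset (Fin n) := Finset.univ \ (X ∪ T₁) with hR
      have hXsubT : X ⊆ T₁ := by
        by_cases hRc : ℓ - t ≤ R.card
        · obtain ⟨S, hSR, hScard⟩ := Finset.exists_subset_card_eq hRc
          have hdisj : Disjoint X S := by
            apply Finset.disjoint_left.mpr
            intro x hxX hxS
            have := hSR hxS
            rw [hR, Finset.mem_sdiff, Finset.mem_union] at this
            exact this.2 (Or.inl hxX)
          have hB'card : (X ∪ S).card = ℓ := by
            rw [Finset.card_union_of_disjoint hdisj, hX, hScard]
            omega
          have hB'G := hstar _ hB'card Finset.subset_union_left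
          have hcov := hT₁cov _ hB'G
          have hsub : T₁ ∩ (X ∪ S) ⊆ T₁ ∩ X := by
            intro x hx
            rw [Finset.mem_inter, Finset.mem_union] at hx
            rcases hx.2 with h | h
            · exact Finset.mem_inter.mpr ⟨hx.1, h⟩
            · exfalso
              have := hSR h
              rw [hR, Finset.mem_sdiff, Finset.mem_union] at this
              exact this.2 (Or.inr hx.1)
          have hXT : t ≤ (T₁ ∩ X).card := le_trans hcov (Finset.card_le_card hsub)
          have : T₁ ∩ X = X := by
            apply Finset.eq_of_subset_of_card_le Finset.inter_subset_right
            rw [hX]; exact hXT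
          exact Finset.inter_eq_right.mp this
        · -- impossible: too few points outside X ∪ T₁
          exfalso
          push_neg at hRc
          have hXR : (X ∪ R).card ≤ ℓ := by
            calc (X ∪ R).card ≤ X.card + R.card := Finset.card_union_le X R
              _ ≤ t + (ℓ - t) := by omega
              _ ≤ ℓ := by omega
          obtain ⟨B', hsub, hB'card⟩ := Finset.exists_superset_card_eq hXR
            (by rw [Fintype.card_fin]; exact hln)
          have hB'G := hstar B' hB'card
            (le_trans (α := Finset (Fin n)) Finset.subset_union_left hsub)
          have hcov := hT₁cov B' hB'G
          have h6 : Finset.univ \ B' ⊆ T₁ \ B' := by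
            intro x hx
            rw [Finset.mem_sdiff] at hx
            rw [Finset.mem_sdiff]
            refine ⟨?_, hx.2⟩
            by_contra hxT
            have hxXR : x ∈ X ∪ R := by
              rw [Finset.mem_union]
              right
              rw [hR, Finset.mem_sdiff, Finset.mem_union]
              exact ⟨Finset.mem_univ x, fun h => by
                rcases h with h | h
                · exact hx.2 (hsub (Finset.mem_union_left _ h))
                · exact hxT h⟩
            exact hx.2 (hsub hxXR)
          have h7 : (Finset.univ \ B').card = n - ℓ := by
            rw [Finset.card_sdiff_of_subset (Finset.subset_univ B'), Finset.card_univ,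
              Fintype.card_fin, hB'card]
          have h8 : n - ℓ ≤ (T₁ \ B').card := h7 ▸ Finset.card_le_card h6
          have h9 : (T₁ ∩ B').card + (T₁ \ B').card = T₁.card :=
            Finset.card_inter_add_card_sdiff T₁ B'
          omega
      -- now |T₁ \ X| = 1 and T₁ t-covers B
      have hT₁X : (T₁ \ X).card = 1 := by
        have := Finset.card_sdiff_of_subset hXsubT
        rw [hT₁card, hX] at this
        omega
      have hcovB := hT₁cov B hB
      have hsub2 : T₁ ∩ B ⊆ (X ∩ B) ∪ (T₁ \ X) := by
        intro x hx
        rw [Finset.mem_inter] at hx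
        rw [Finset.mem_union, Finset.mem_inter, Finset.mem_sdiff]
        by_cases hxX : x ∈ X
        · exact Or.inl ⟨hxX, hx.2⟩
        · exact Or.inr ⟨hx.1, hxX⟩
      have h10 : (T₁ ∩ B).card ≤ (X ∩ B).card + 1 := by
        calc (T₁ ∩ B).card ≤ ((X ∩ B) ∪ (T₁ \ X)).card := Finset.card_le_card hsub2
          _ ≤ (X ∩ B).card + (T₁ \ X).card := Finset.card_union_le _ _
          _ = (X ∩ B).card + 1 := by rw [hT₁X]
      omega
  -- conclusion
  intro A hA B hB hXB
  have hXsubA : X ⊆ A := hXA A hA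
  have hBX1 : (B ∩ X).card < t := by
    have hne : B ∩ X ≠ X := by
      intro h
      exact hXB (Finset.inter_eq_right.mp h)
    have hss : B ∩ X ⊂ X := Finset.ssubset_iff_subset_ne.mpr ⟨Finset.inter_subset_right, hne⟩
    have := Finset.card_lt_card hss
    omega
  have hBX2 : t - 1 ≤ (B ∩ X).card := by
    have := hL B hB
    rwa [Finset.inter_comm] at this
  have hBXeq : (B ∩ X).card = t - 1 := by omega
  refine ⟨hXsubA, hBXeq, ?_⟩
  -- A ∩ (B ∪ X) = (A ∩ B) ∪ X
  have hEq : A ∩ (B ∪ X) = (A ∩ B) ∪ X := by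
    rw [Finset.inter_union_distrib_left, Finset.inter_eq_right.mpr hXsubA]
  have hEq2 : (A ∩ B) ∩ X = B ∩ X := by
    rw [Finset.inter_assoc]
    apply Finset.inter_eq_right.mpr
    exact le_trans (α := Finset (Fin n)) Finset.inter_subset_right hXsubA
  have h11 : ((A ∩ B) ∪ X).card + ((A ∩ B) ∩ X).card = (A ∩ B).card + X.card :=
    Finset.card_union_add_card_inter _ _
  have h12 := hcross A hA B hB
  rw [hEq]
  rw [hEq2, hBXeq, hX] at h11
  omega
end

section
/- Let n ≥ k + ℓ, G an ℓ-subset and S an s-subset of [n] with |G ∩ S| = w < t, and F ⊆ binom([n],k) a family with |G ∩ F| ≥ t for all F ∈ F. Then |F_S| ≤ binom(ℓ-w, t-w) · binom(n - s - t + w, k - s - t + w), where F_S = {F ∈ F : S ⊆ F}. -/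
/-!
Each member of `F` has at least `t - w` elements in `G \ S`, so every member of `F_S` contains
`S ∪ T` for one of the `binom(ℓ - w, t - w)` sets `T ⊆ G \ S` of size `t - w`, and at most
`binom(n - s - t + w, k - s - t + w)` `k`-sets contain a given `S ∪ T`.
-/

open Finset

namespace Nat

theorem choose_le_choose_of_le_of_two_mul_le {N a b : ℕ} (hab : a ≤ b) (hb : 2 * b ≤ N) :
    N.choose a ≤ N.choose b := by
  induction hab using Nat.decreasingInduction with
  | self => rfl
  | of_succ r hr ih => exact (choose_le_succ_of_lt_half_left (by omega)).trans ih

theorem choose_le_choose_of_le_of_add_le {N a b : ℕ} (hab : a ≤ b) (h : a + b ≤ N) :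
    N.choose a ≤ N.choose b := by
  rcases le_or_gt (2 * b) N with hb | hb
  · exact choose_le_choose_of_le_of_two_mul_le hab hb
  · rw [← choose_symm (show b ≤ N by omega)]
    exact choose_le_choose_of_le_of_two_mul_le (by omega) (by omega)

/-- When `k < s + t` the truncated lower index `k - s - t + w` on the right is `w`, not
`k - (s + t - w)`; unimodality of binomial coefficients covers that case. -/
theorem choose_tsub_le_choose_tsub_add {n k s t w : ℕ} (hwt : w ≤ t) (hkn : k + w ≤ n) :
    (n - (s + (t - w))).choose (k - (s + (t - w))) ≤ (n - s - t + w).choose (k - s - t + w) := by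
  rcases le_or_gt (s + t) k with hst | hst
  · rw [show n - (s + (t - w)) = n - s - t + w by omega,
      show k - (s + (t - w)) = k - s - t + w by omega]
  rw [show k - s - t + w = w by omega]
  rcases le_or_gt (s + (t - w)) k with hk | hk
  · rw [show n - (s + (t - w)) = n - s - t + w by omega]
    exact choose_le_choose_of_le_of_add_le (by omega) (by omega)
  · rw [Nat.sub_eq_zero_of_le hk.le, choose_zero_right]
    exact choose_pos (by omega)

end Nat

namespace Finset

variable {α : Type*} [DecidableEq α]

theorem card_filter_superset_le_choose [Fintype α] {𝒜 : Finset (Finset α)} {k : ℕ}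
    (h𝒜 : ∀ A ∈ 𝒜, #A = k) (U : Finset α) :
    #{A ∈ 𝒜 | U ⊆ A} ≤ (Fintype.card α - #U).choose (k - #U) := by
  by_cases hU : #U ≤ k
  · calc #{A ∈ 𝒜 | U ⊆ A} ≤ #{A ∈ univ.powersetCard k | U ⊆ A} := by
          refine card_le_card fun A hA => ?_
          rw [mem_filter] at hA ⊢
          exact ⟨mem_powersetCard.mpr ⟨subset_univ A, h𝒜 A hA.1⟩, hA.2⟩
      _ = (Fintype.card α - #U).choose (k - #U) := by
          rw [card_filter_powersetCard_subset U univ k (subset_univ U) hU, card_univ]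
  · rw [filter_false_of_mem fun A hA hUA => hU (h𝒜 A hA ▸ card_le_card hUA), card_empty]
    exact Nat.zero_le _

theorem card_le_choose_mul_of_le_card_inter {𝒜 : Finset (Finset α)} {R : Finset α} {m c : ℕ}
    (h𝒜 : ∀ A ∈ 𝒜, m ≤ #(R ∩ A))
    (hc : ∀ T ∈ R.powersetCard m, #{A ∈ 𝒜 | T ⊆ A} ≤ c) :
    #𝒜 ≤ (#R).choose m * c := by
  have hcover : 𝒜 ⊆ (R.powersetCard m).biUnion fun T => {A ∈ 𝒜 | T ⊆ A} := by
    intro A hA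
    obtain ⟨T, hT, hTcard⟩ := exists_subset_card_eq (h𝒜 A hA)
    exact mem_biUnion.mpr ⟨T, mem_powersetCard.mpr ⟨hT.trans inter_subset_left, hTcard⟩,
      mem_filter.mpr ⟨hA, hT.trans inter_subset_right⟩⟩
  calc #𝒜 ≤ ∑ T ∈ R.powersetCard m, #{A ∈ 𝒜 | T ⊆ A} :=
        (card_le_card hcover).trans card_biUnion_le
    _ ≤ ∑ _T ∈ R.powersetCard m, c := sum_le_sum hc
    _ = (#R).choose m * c := by rw [sum_const, card_powersetCard, smul_eq_mul]

theorem card_inter_le_card_sdiff_inter_add (G S A : Finset α) :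
    #(G ∩ A) ≤ #((G \ S) ∩ A) + #(G ∩ S) := by
  refine (card_le_card fun x hx => ?_).trans (card_union_le _ _)
  simp only [mem_union, mem_inter, mem_sdiff] at hx ⊢
  tauto

end Finset

theorem stmt_10_general (n k ℓ t s w : ℕ) (hn : k + ℓ ≤ n)
    (G S : Finset (Fin n)) (hG : G.card = ℓ) (hS : S.card = s)
    (hw : (G ∩ S).card = w) (hwt : w < t)
    (F : Finset (Finset (Fin n)))
    (hF : ∀ A ∈ F, A.card = k)
    (hmeet : ∀ A ∈ F, t ≤ (G ∩ A).card) :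
    (F.filter (fun A => S ⊆ A)).card ≤
      (ℓ - w).choose (t - w) * (n - s - t + w).choose (k - s - t + w) := by
  have hwℓ : w ≤ ℓ := hw ▸ hG ▸ card_le_card inter_subset_left
  have hGS : #(G \ S) = ℓ - w := by
    have := card_sdiff_add_card_inter G S
    omega
  have hmeetGS : ∀ A ∈ F.filter (S ⊆ ·), t - w ≤ #((G \ S) ∩ A) := fun A hA => by
    have := card_inter_le_card_sdiff_inter_add G S A
    have := hmeet A (mem_filter.mp hA).1
    omega
  have hfiber : ∀ T ∈ (G \ S).powersetCard (t - w), #{A ∈ F.filter (S ⊆ ·) | T ⊆ A} ≤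
      (n - (s + (t - w))).choose (k - (s + (t - w))) := fun T hT => by
    obtain ⟨hTGS, hTcard⟩ := mem_powersetCard.mp hT
    have hST : #(S ∪ T) = s + (t - w) := by
      rw [card_union_of_disjoint (disjoint_of_subset_right hTGS disjoint_sdiff), hS, hTcard]
    have := card_filter_superset_le_choose hF (S ∪ T)
    rw [hST, Fintype.card_fin] at this
    simpa only [filter_filter, union_subset_iff] using this
  calc (F.filter (S ⊆ ·)).card
      ≤ (ℓ - w).choose (t - w) * (n - (s + (t - w))).choose (k - (s + (t - w))) :=
        hGS ▸ card_le_choose_mul_of_le_card_inter hmeetGS hfiber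
    _ ≤ _ := Nat.mul_le_mul_left _ (Nat.choose_tsub_le_choose_tsub_add hwt.le (by omega))

/-- If every member of `F ⊆ binom([n],k)` meets the `ℓ`-set `G` in at
least `t` elements, `S` is an `s`-set with `|G ∩ S| = w < t`, then the number of
members of `F` containing `S` is at most
`binom(ℓ-w, t-w) · binom(n-s-t+w, k-s-t+w)`. -/
theorem stmt_10 (n k ℓ t s w : ℕ) (hk : 0 < k) (hl : 0 < ℓ) (ht : 0 < t)
    (hs : 0 < s) (hn : k + ℓ ≤ n)
    (G S : Finset (Fin n)) (hG : G.card = ℓ) (hS : S.card = s)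
    (hw : (G ∩ S).card = w) (hwt : w < t)
    (F : Finset (Finset (Fin n)))
    (hF : ∀ A ∈ F, A.card = k)
    (hmeet : ∀ A ∈ F, t ≤ (G ∩ A).card) :
    (F.filter (fun A => S ⊆ A)).card ≤
      (ℓ - w).choose (t - w) * (n - s - t + w).choose (k - s - t + w) :=
  stmt_10_general n k ℓ t s w hn G S hG hS hw hwt F hF hmeet
end

section
/- Let 1 ≤ t ≤ ℓ and n ≥ (t+1)²(k-t+1)(ℓ-t+1)+t+1. Then the function f(m) = k^{m-t-2}·(k-t+1)²·binom(m,t)·binom(n-m, ℓ-m) is strictly decreasing as m ranges over {t, t+1, …, ℓ}; moreover f(m) < (t+1)(k-t+1)·binom(n-t-1, ℓ-t-1) whenever t+2 ≤ m ≤ ℓ. -/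
lemma core1 (t s v c e : ℕ) (ht : 1 ≤ t)
    (h : (t+1)^2*(c+2)*(s+v+2)+t+1 ≤ t+s+1+e) :
    (t+1+c)*(t+s+1)*(v+1) < (s+1)*(e+1) := by
  have he : (t+1)^2*(c+2)*(s+v+2) ≤ s + e := by linarith
  have hq : 8 ≤ (t+1)^2*(c+2) := by nlinarith
  have ha : t+1+c ≤ (t+1)*(c+2) := by nlinarith [Nat.zero_le (t*c)]
  have hb : t+s+1 ≤ (t+1)*(s+1) := by nlinarith [Nat.zero_le (t*s)]
  have h12 : (t+1+c)*(t+s+1) ≤ (t+1)^2*(c+2)*(s+1) := by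
    calc (t+1+c)*(t+s+1) ≤ ((t+1)*(c+2))*((t+1)*(s+1)) := Nat.mul_le_mul ha hb
      _ = (t+1)^2*(c+2)*(s+1) := by ring
  have hA : (t+1+c)*(t+s+1)*(v+1) ≤ (t+1)^2*(c+2)*(s+1)*(v+1) :=
    Nat.mul_le_mul_right _ h12
  have hB : (s+1)*((t+1)^2*(c+2)*(s+v+2)) ≤ (s+1)*(s+e) := Nat.mul_le_mul_left _ he
  have hC : 8*((s+1)*(s+1)) ≤ (t+1)^2*(c+2)*((s+1)*(s+1)) := Nat.mul_le_mul_right _ hq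
  nlinarith [hA, hB, hC]

lemma nat1 (t s v c e : ℕ) (ht : 1 ≤ t)
    (h : (t+1)^2*(c+2)*(s+v+2)+t+1 ≤ t+s+1+e) :
    (t+1+c) * ((t+s+1).choose t) * (e.choose v) <
      ((t+s).choose t) * ((e+1).choose (v+1)) := by
  have hsv : s+v+2 ≤ (t+1)^2*(c+2)*(s+v+2) := Nat.le_mul_of_pos_left _ (by positivity)
  have hve : v ≤ e := by omega
  have h1 : (t+s).choose t * (t+s+1) = (t+s+1).choose t * (s+1) := by
    have := Nat.choose_mul_succ_eq (t+s) t
    simpa [show t+s+1-t = s+1 by omega] using this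
  have h2 : (e+1) * e.choose v = (e+1).choose (v+1) * (v+1) := Nat.add_one_mul_choose_eq e v
  have hc1 : 0 < (t+s).choose t := Nat.choose_pos (Nat.le_add_right t s)
  have hc2 : 0 < (e+1).choose (v+1) := Nat.choose_pos (by omega)
  have key := core1 t s v c e ht h
  apply Nat.lt_of_mul_lt_mul_left (a := (s+1)*(e+1))
  have e1 : (s+1)*(e+1) * ((t+1+c) * (t+s+1).choose t * e.choose v)
      = (t+1+c)*(t+s+1)*(v+1) * ((t+s).choose t * (e+1).choose (v+1)) := by
    calc (s+1)*(e+1) * ((t+1+c) * (t+s+1).choose t * e.choose v)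
        = (t+1+c) * ((t+s+1).choose t * (s+1)) * ((e+1) * e.choose v) := by ring
      _ = (t+1+c) * ((t+s).choose t * (t+s+1)) * ((e+1).choose (v+1) * (v+1)) := by
          rw [← h1, h2]
      _ = (t+1+c)*(t+s+1)*(v+1) * ((t+s).choose t * (e+1).choose (v+1)) := by ring
  rw [e1]
  exact Nat.mul_lt_mul_of_lt_of_le key (le_refl _) (Nat.mul_pos hc1 hc2)

lemma core2 (t w c e : ℕ) (ht : 1 ≤ t)
    (h : (t+1)^2*(c+2)*(w+3)+t+1 ≤ t+2+e) :
    (c+2)*(t+2)*(w+1) < 2*(e+1) := by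
  have he : (t+1)^2*(c+2)*(w+3) ≤ e + 1 := by linarith
  nlinarith [Nat.zero_le (t*c), Nat.zero_le (t*w), Nat.zero_le (c*w)]

lemma natbase (t w c e : ℕ) (ht : 1 ≤ t)
    (h : (t+1)^2*(c+2)*(w+3)+t+1 ≤ t+2+e) :
    (c+2)^2 * ((t+2).choose t) * (e.choose w) <
      (t+1)*(c+2) * ((e+1).choose (w+1)) := by
  have hw3 : w+3 ≤ (t+1)^2*(c+2)*(w+3) := Nat.le_mul_of_pos_left _ (by positivity)
  have hwe : w ≤ e := by omega
  have h1 : 2 * (t+2).choose t = (t+2)*(t+1) := by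
    have hs : (t+2).choose t = (t+2).choose 2 := by
      simpa [Nat.add_sub_cancel] using Nat.choose_symm (show 2 ≤ t+2 by omega)
    have h := Nat.add_one_mul_choose_eq (t+1) 1
    simp only [Nat.succ_eq_add_one, Nat.choose_one_right] at h
    norm_num at h
    simp only [show t+1+1 = t+2 by omega] at h
    rw [hs]
    omega
  have h2 : (e+1) * e.choose w = (e+1).choose (w+1) * (w+1) := Nat.add_one_mul_choose_eq e w
  have hc1 : 0 < e.choose w := Nat.choose_pos hwe
  have key := core2 t w c e ht h
  apply Nat.lt_of_mul_lt_mul_left (a := 2*(w+1))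
  have e1 : 2*(w+1) * ((c+2)^2 * (t+2).choose t * e.choose w)
      = (c+2)*(t+2)*(w+1) * ((t+1)*(c+2)*e.choose w) := by
    calc 2*(w+1) * ((c+2)^2 * (t+2).choose t * e.choose w)
        = (c+2)^2 * (2 * (t+2).choose t) * ((w+1) * e.choose w) := by ring
      _ = (c+2)^2 * ((t+2)*(t+1)) * ((w+1) * e.choose w) := by rw [h1]
      _ = (c+2)*(t+2)*(w+1) * ((t+1)*(c+2)*e.choose w) := by ring
  have e2 : 2*(w+1) * ((t+1)*(c+2) * (e+1).choose (w+1))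
      = 2*(e+1) * ((t+1)*(c+2)*e.choose w) := by
    calc 2*(w+1) * ((t+1)*(c+2) * (e+1).choose (w+1))
        = 2*((t+1)*(c+2)) * ((e+1).choose (w+1) * (w+1)) := by ring
      _ = 2*((t+1)*(c+2)) * ((e+1) * e.choose w) := by rw [← h2]
      _ = 2*(e+1) * ((t+1)*(c+2)*e.choose w) := by ring
  rw [e1, e2]
  exact Nat.mul_lt_mul_of_lt_of_le key (le_refl _) (by positivity)

/-- For `1 ≤ t ≤ ℓ`, `t + 1 ≤ k` and
`n ≥ (t+1)²(k-t+1)(ℓ-t+1)+t+1`, the rational-valued function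
`f(m) = k^(m-t-2)·(k-t+1)²·binom(m,t)·binom(n-m, ℓ-m)` is strictly decreasing on
`{t, …, ℓ}`, and `f(m) < (t+1)(k-t+1)·binom(n-t-1, ℓ-t-1)` for `t+2 ≤ m ≤ ℓ`. -/
theorem stmt_12 (n k ℓ t : ℕ) (ht : 1 ≤ t) (htl : t ≤ ℓ) (htk : t + 1 ≤ k)
    (hn : (t + 1) ^ 2 * (k - t + 1) * (ℓ - t + 1) + t + 1 ≤ n) :
    (∀ m : ℕ, t ≤ m → m + 1 ≤ ℓ →
      (k : ℚ) ^ ((m + 1 : ℤ) - t - 2) * ((k : ℚ) - t + 1) ^ 2 *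
          ((m + 1).choose t : ℚ) * ((n - (m + 1)).choose (ℓ - (m + 1)) : ℚ) <
        (k : ℚ) ^ ((m : ℤ) - t - 2) * ((k : ℚ) - t + 1) ^ 2 *
          (m.choose t : ℚ) * ((n - m).choose (ℓ - m) : ℚ)) ∧
    (∀ m : ℕ, t + 2 ≤ m → m ≤ ℓ →
      (k : ℚ) ^ ((m : ℤ) - t - 2) * ((k : ℚ) - t + 1) ^ 2 *
          (m.choose t : ℚ) * ((n - m).choose (ℓ - m) : ℚ) <
        ((t : ℚ) + 1) * ((k : ℚ) - t + 1) * ((n - t - 1).choose (ℓ - t - 1) : ℚ)) := by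
  obtain ⟨c, rfl⟩ : ∃ c, k = t + 1 + c := ⟨k - (t+1), by omega⟩
  have hk0 : ((t + 1 + c : ℕ) : ℚ) ≠ 0 := by positivity
  have hkQ : (0:ℚ) < ((t + 1 + c : ℕ) : ℚ) - t + 1 := by push_cast; linarith
  have part1 : ∀ m : ℕ, t ≤ m → m + 1 ≤ ℓ →
      ((t+1+c : ℕ) : ℚ) ^ ((m + 1 : ℤ) - t - 2) * (((t+1+c : ℕ) : ℚ) - t + 1) ^ 2 *
          ((m + 1).choose t : ℚ) * ((n - (m + 1)).choose (ℓ - (m + 1)) : ℚ) <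
        ((t+1+c : ℕ) : ℚ) ^ ((m : ℤ) - t - 2) * (((t+1+c : ℕ) : ℚ) - t + 1) ^ 2 *
          (m.choose t : ℚ) * ((n - m).choose (ℓ - m) : ℚ) := by
    intro m hm hml
    obtain ⟨s, rfl⟩ : ∃ s, m = t + s := ⟨m - t, by omega⟩
    obtain ⟨v, rfl⟩ : ∃ v, ℓ = t + s + 1 + v := ⟨ℓ - (t+s+1), by omega⟩
    rw [show t + 1 + c - t + 1 = c + 2 by omega,
        show t + s + 1 + v - t + 1 = s + v + 2 by omega] at hn
    have hsv : s+v+2 ≤ (t+1)^2*(c+2)*(s+v+2) := Nat.le_mul_of_pos_left _ (by positivity)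
    obtain ⟨e, rfl⟩ : ∃ e, n = t + s + 1 + e := ⟨n - (t+s+1), by omega⟩
    have hnat := nat1 t s v c e ht (by omega)
    have hnatQ : ((t+1+c : ℕ) : ℚ) * ((t+s+1).choose t : ℚ) * (e.choose v : ℚ) <
        ((t+s).choose t : ℚ) * ((e+1).choose (v+1) : ℚ) := by
      exact_mod_cast hnat
    rw [show t + s + 1 + e - (t + s + 1) = e by omega,
        show t + s + 1 + v - (t + s + 1) = v by omega,
        show t + s + 1 + e - (t + s) = e + 1 by omega,
        show t + s + 1 + v - (t + s) = v + 1 by omega,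
        show ((↑(t + s) + 1 : ℤ) - ↑t - 2) = ((↑(t + s) : ℤ) - ↑t - 2) + 1 by ring,
        zpow_add_one₀ hk0]
    have hP : (0:ℚ) < ((t+1+c:ℕ):ℚ) ^ ((↑(t + s) : ℤ) - ↑t - 2) *
        (((t+1+c:ℕ):ℚ) - t + 1)^2 := by
      apply mul_pos (zpow_pos (by positivity) _) (by positivity)
    calc ((t+1+c:ℕ):ℚ) ^ ((↑(t + s) : ℤ) - ↑t - 2) * ((t+1+c:ℕ):ℚ) *
            (((t+1+c:ℕ):ℚ) - ↑t + 1) ^ 2 * ((t + s + 1).choose t : ℚ) * (e.choose v : ℚ)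
        = (((t+1+c:ℕ):ℚ) ^ ((↑(t + s) : ℤ) - ↑t - 2) * (((t+1+c:ℕ):ℚ) - ↑t + 1) ^ 2) *
            (((t+1+c:ℕ):ℚ) * ((t + s + 1).choose t : ℚ) * (e.choose v : ℚ)) := by ring
      _ < (((t+1+c:ℕ):ℚ) ^ ((↑(t + s) : ℤ) - ↑t - 2) * (((t+1+c:ℕ):ℚ) - ↑t + 1) ^ 2) *
            (((t+s).choose t : ℚ) * ((e+1).choose (v+1) : ℚ)) :=
          mul_lt_mul_of_pos_left hnatQ hP
      _ = ((t+1+c:ℕ):ℚ) ^ ((↑(t + s) : ℤ) - ↑t - 2) * (((t+1+c:ℕ):ℚ) - ↑t + 1) ^ 2 *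
            ((t+s).choose t : ℚ) * ((e+1).choose (v+1) : ℚ) := by ring
  refine ⟨part1, ?_⟩
  intro m hm
  induction m, hm using Nat.le_induction with
  | base =>
    intro hml
    obtain ⟨w, rfl⟩ : ∃ w, ℓ = t + 2 + w := ⟨ℓ - (t+2), by omega⟩
    rw [show t + 1 + c - t + 1 = c + 2 by omega,
        show t + 2 + w - t + 1 = w + 3 by omega] at hn
    have hw3 : w+3 ≤ (t+1)^2*(c+2)*(w+3) := Nat.le_mul_of_pos_left _ (by positivity)
    obtain ⟨e, rfl⟩ : ∃ e, n = t + 2 + e := ⟨n - (t+2), by omega⟩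
    have hnat := natbase t w c e ht (by omega)
    have hnatQ : (((c:ℚ)+2))^2 * ((t+2).choose t : ℚ) * (e.choose w : ℚ) <
        ((t:ℚ)+1)*((c:ℚ)+2) * ((e+1).choose (w+1) : ℚ) := by
      exact_mod_cast hnat
    rw [show t + 2 + e - (t + 2) = e by omega,
        show t + 2 + w - (t + 2) = w by omega,
        show t + 2 + e - t - 1 = e + 1 by omega,
        show t + 2 + w - t - 1 = w + 1 by omega,
        show ((↑(t + 2) : ℤ) - ↑t - 2) = 0 by push_cast; ring,
        zpow_zero]
    have hQ2 : (((t+1+c:ℕ)):ℚ) - (t:ℚ) + 1 = (c:ℚ) + 2 := by push_cast; ring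
    rw [hQ2]
    calc (1:ℚ) * ((c:ℚ)+2)^2 * ((t+2).choose t : ℚ) * (e.choose w : ℚ)
        = ((c:ℚ)+2)^2 * ((t+2).choose t : ℚ) * (e.choose w : ℚ) := by ring
      _ < ((t:ℚ)+1)*((c:ℚ)+2) * ((e+1).choose (w+1) : ℚ) := hnatQ
  | succ m hm ih =>
    intro hml
    have h1 := part1 m (by omega) hml
    have h2 := ih (by omega)
    have hcast : ((↑(m+1) : ℤ) - ↑t - 2) = ((↑m + 1 : ℤ) - ↑t - 2) := by push_cast; ring
    rw [hcast]
    exact h1.trans h2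
end

section
/- Let F ⊆ binom([n],k) and G ⊆ binom([n],ℓ) be maximal cross t-intersecting families with n ≥ 2(k-t+1)(ℓ-t+1)+t+1. If τ_t(F) = m_f, then |F| ≤ binom(m_f, t) · binom(n-t, k-t). -/
/-- For maximal cross `t`-intersecting families `F ⊆ binom([n],k)`,
`G ⊆ binom([n],ℓ)` with `n ≥ 2(k-t+1)(ℓ-t+1)+t+1` and `τ_t(F) = m_f`, one has
`|F| ≤ binom(m_f, t)·binom(n-t, k-t)`. -/
theorem stmt_13 (n k ℓ t : ℕ) (hk : 0 < k) (hl : 0 < ℓ) (ht : 0 < t)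
    (hn : 2 * (k - t + 1) * (ℓ - t + 1) + t + 1 ≤ n)
    (F G : Finset (Finset (Fin n)))
    (hF : ∀ A ∈ F, A.card = k) (hG : ∀ B ∈ G, B.card = ℓ)
    (hcross : ∀ A ∈ F, ∀ B ∈ G, t ≤ (A ∩ B).card)
    (hmax : ∀ F' G' : Finset (Finset (Fin n)),
      (∀ A ∈ F', A.card = k) → (∀ B ∈ G', B.card = ℓ) →
      F ⊆ F' → G ⊆ G' →
      (∀ A ∈ F', ∀ B ∈ G', t ≤ (A ∩ B).card) → F' = F ∧ G' = G)
    (mf : ℕ)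
    (hmf : IsLeast {c | ∃ T : Finset (Fin n),
      (∀ A ∈ F, t ≤ (T ∩ A).card) ∧ T.card = c} mf) :
    F.card ≤ mf.choose t * (n - t).choose (k - t) := by
  classical
  obtain ⟨⟨T, hTcov, hTcard⟩, -⟩ := hmf
  have hchoice : ∀ A ∈ F, ∃ S, S ⊆ T ∩ A ∧ S.card = t := by
    intro A hA
    obtain ⟨S, hS1, hS2⟩ := Finset.exists_subset_card_eq (hTcov A hA)
    exact ⟨S, hS1, hS2⟩
  choose! S hS1 hS2 using hchoice
  set target := (T.powersetCard t).biUnion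
      (fun s => {s} ×ˢ (Finset.univ \ s).powersetCard (k - t)) with htarget
  have hmap : ∀ A ∈ F, (S A, A \ S A) ∈ target := by
    intro A hA
    apply Finset.mem_biUnion.mpr
    refine ⟨S A, ?_, ?_⟩
    · rw [Finset.mem_powersetCard]
      exact ⟨(hS1 A hA).trans Finset.inter_subset_left, hS2 A hA⟩
    · rw [Finset.mem_product]
      refine ⟨by simp, ?_⟩
      rw [Finset.mem_powersetCard]
      constructor
      · intro x hx
        simp only [Finset.mem_sdiff] at hx ⊢
        exact ⟨Finset.mem_univ x, hx.2⟩
      · rw [Finset.card_sdiff_of_subset ((hS1 A hA).trans Finset.inter_subset_right), hF A hA, hS2 A hA]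
  have hinj : Set.InjOn (fun A => (S A, A \ S A)) F := by
    intro A hA B hB h
    simp only [Prod.mk.injEq] at h
    have hSA : S A ⊆ A := (hS1 A hA).trans Finset.inter_subset_right
    have hSB : S B ⊆ B := (hS1 B hB).trans Finset.inter_subset_right
    have hAe : A = S A ∪ (A \ S A) := (Finset.union_sdiff_of_subset hSA).symm
    rw [hAe, h.2, h.1, Finset.union_sdiff_of_subset hSB]
  have hle := Finset.card_le_card_of_injOn _ hmap hinj
  refine hle.trans ?_
  rw [htarget]
  refine le_trans Finset.card_biUnion_le ?_
  refine le_trans (Finset.sum_le_card_nsmul _ _ ((n - t).choose (k - t)) ?_) ?_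
  · intro s hs
    rw [Finset.mem_powersetCard] at hs
    rw [Finset.card_product, Finset.card_singleton, one_mul,
      Finset.card_powersetCard, Finset.card_sdiff_of_subset (Finset.subset_univ s),
      Finset.card_univ, Fintype.card_fin, hs.2]
  · rw [Finset.card_powersetCard, hTcard, smul_eq_mul]
end

section
/- For positive integers n, k_1, k_2, t with k_1 ≥ k_2 ≥ 2t+1 and n ≥ max{t+1, k_2-t}·(t+1)(k_1-t+1)(k_2-t+1)+t+1, one has g_1(k_1,k_2,n,t) > g_2(k_1,k_2,n,t), where g_1 = (binom(n-t,k_1-t) - binom(n-k_2-1,k_1-t))·(binom(n-t,k_2-t)+t) and g_2 = binom(n-t-1,k_1-t-1)·((t+1)·binom(n-t-1,k_2-t) + binom(n-t-1,k_2-t-1)). -/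
lemma key1 (m a : ℕ) : ∀ c, c ≤ m →
    (m - c).choose (a+1) + c * (m - c).choose a ≤ m.choose (a+1) := by
  intro c
  induction c with
  | zero => simp
  | succ c ih =>
    intro hc
    have ihh := ih (by omega)
    have hs : m - c = (m - (c+1)) + 1 := by omega
    rw [hs, Nat.choose_succ_succ] at ihh
    simp only [Nat.succ_eq_add_one] at ihh
    have h2 : c * (m - (c+1)).choose a ≤ c * ((m - (c+1)) + 1).choose a :=
      Nat.mul_le_mul_left c (Nat.choose_le_choose a (by omega))
    have h3 : (c+1) * (m - (c+1)).choose a = c * (m - (c+1)).choose a + (m - (c+1)).choose a := by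
      ring
    omega

lemma key2 (q r : ℕ) : ∀ d, (q + d).choose r * (q + 1 - r)^d ≤ q.choose r * (q + d)^d := by
  intro d
  induction d with
  | zero => simp
  | succ d ih =>
    simp only [← Nat.add_assoc]
    have h1 : (q + d + 1).choose r * (q + d + 1 - r) = (q + d).choose r * (q + d + 1) := by
      have := Nat.choose_mul_succ_eq (q + d) r
      omega
    calc (q + d + 1).choose r * (q + 1 - r)^(d+1)
        = ((q + (d+1)).choose r * (q + 1 - r)) * (q + 1 - r)^d := by ring
      _ ≤ ((q + d + 1).choose r * (q + d + 1 - r)) * (q + 1 - r)^d := by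
          exact Nat.mul_le_mul_right _ (Nat.mul_le_mul_left _ (by omega))
      _ = (q + d + 1) * ((q + d).choose r * (q + 1 - r)^d) := by rw [h1]; ring
      _ ≤ (q + d + 1) * (q.choose r * (q + d)^d) := Nat.mul_le_mul_left _ ih
      _ ≤ q.choose r * (q + d + 1)^(d+1) := by
          have : (q + d)^d ≤ (q + d + 1)^d := Nat.pow_le_pow_left (by omega) d
          calc (q + d + 1) * (q.choose r * (q + d)^d)
              ≤ (q + d + 1) * (q.choose r * (q + d + 1)^d) := by
                exact Nat.mul_le_mul_left _ (Nat.mul_le_mul_left _ this)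
            _ = q.choose r * (q + d + 1)^(d+1) := by ring

lemma key3 (u e : ℕ) : ∀ d, (u + e)^d * (u - d * e) ≤ u^(d+1) := by
  intro d
  induction d with
  | zero => simp
  | succ d ih =>
    have h1 : (u + e) * (u - (d+1) * e) ≤ (u - d * e) * u := by
      rcases Nat.le_total u ((d+1) * e) with h | h
      · rw [Nat.sub_eq_zero_of_le h]; simp
      · have hd : d * e ≤ u := by nlinarith
        zify [h, hd]
        nlinarith [mul_nonneg (mul_nonneg (Int.natCast_nonneg d) (Int.natCast_nonneg e)) (Int.natCast_nonneg e), mul_nonneg (Int.natCast_nonneg e) (Int.natCast_nonneg e)]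
    calc (u + e)^(d+1) * (u - (d+1) * e)
        = (u + e)^d * ((u + e) * (u - (d+1) * e)) := by ring
      _ ≤ (u + e)^d * ((u - d * e) * u) := Nat.mul_le_mul_left _ h1
      _ = ((u + e)^d * (u - d * e)) * u := by ring
      _ ≤ u^(d+1) * u := Nat.mul_le_mul_right _ ih
      _ = u^(d+2) := by ring

lemma key4 (u e d t : ℕ) (h : (t+2) * d * e ≤ u) :
    (t+1) * (u + e)^d ≤ (t+2) * u^d := by
  rcases Nat.eq_zero_or_pos (d * e) with h0 | h0
  · rcases Nat.mul_eq_zero.mp h0 with h0 | h0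
    · subst h0; simp
    · subst h0; simp
      exact Nat.mul_le_mul_right _ (by omega)
  · have hlt : d * e < u := by nlinarith
    have hpos : 0 < u - d * e := by omega
    apply Nat.le_of_mul_le_mul_right _ hpos
    calc (t+1) * (u + e)^d * (u - d * e)
        = (t+1) * ((u + e)^d * (u - d * e)) := by ring
      _ ≤ (t+1) * u^(d+1) := Nat.mul_le_mul_left _ (key3 u e d)
      _ ≤ (t+2) * u^d * (u - d * e) := by
          have hq : (t+1) * u ≤ (t+2) * (u - d * e) := by
            zify [Nat.le_of_lt hlt]
            nlinarith
          calc (t+1) * u^(d+1) = u^d * ((t+1) * u) := by ring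
            _ ≤ u^d * ((t+2) * (u - d * e)) := Nat.mul_le_mul_left _ hq
            _ = (t+2) * u^d * (u - d * e) := by ring

lemma core (q r b t : ℕ) (hrq : r ≤ q) (hcond : (t+2) * b * (b + r - 1) ≤ q + 1 - r) :
    (t+1) * (q + b).choose r ≤ (t+2) * q.choose r := by
  rcases Nat.eq_zero_or_pos b with hb0 | hb0
  · subst hb0
    simpa using Nat.mul_le_mul_right _ (show t+1 ≤ t+2 by omega)
  · obtain ⟨u, hu⟩ : ∃ u, q + 1 - r = u := ⟨_, rfl⟩
    obtain ⟨e, he⟩ : ∃ e, b + r - 1 = e := ⟨_, rfl⟩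
    rw [hu, he] at hcond
    have hue : u + e = q + b := by omega
    have h2 := key2 q r b
    rw [hu] at h2
    have h4 := key4 u e b t hcond
    have hupos : 0 < u := by omega
    have main : (t+1) * (q+b).choose r * u^b ≤ (t+2) * q.choose r * u^b := by
      calc (t+1) * (q+b).choose r * u^b
          = (t+1) * ((q+b).choose r * u^b) := by ring
        _ ≤ (t+1) * (q.choose r * (q+b)^b) := Nat.mul_le_mul_left _ h2
        _ = q.choose r * ((t+1) * (u+e)^b) := by rw [hue]; ring
        _ ≤ q.choose r * ((t+2) * u^b) := Nat.mul_le_mul_left _ h4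
        _ = (t+2) * q.choose r * u^b := by ring
    exact Nat.le_of_mul_le_mul_right main (pow_pos hupos b)


lemma arith (t b a c P : ℕ) (ht : 1 ≤ t) (hbt : t + 1 ≤ b) (hab : b ≤ a)
    (hc2 : c + 2 = b + a) (hP : b * (t + 1) * (a + 1) * (b + 1) = P) :
    (t + 2) * b * c + c + 2 ≤ P + 1 := by
  subst hP
  have s1 : (t + 2) * b + 1 ≤ 2 * ((t + 1) * b) := by nlinarith
  have s2 : 2 * c + 1 ≤ (a + 1) * (b + 1) := by nlinarith
  have s3 := Nat.mul_le_mul_right c s1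
  have s4 := Nat.mul_le_mul_left ((t + 1) * b) s2
  have s5 : 1 ≤ (t + 1) * b := by nlinarith
  nlinarith [s3, s4, s5]

/-- For `k_1 ≥ k_2 ≥ 2t+1`, `g_1(k_1,k_2,n,t) > g_2(k_1,k_2,n,t)`. -/
theorem stmt_15 (n k1 k2 t : ℕ) (ht : 0 < t) (hk2 : 2 * t + 1 ≤ k2) (hk12 : k2 ≤ k1)
    (hn : max (t + 1) (k2 - t) * (t + 1) * (k1 - t + 1) * (k2 - t + 1) + t + 1 ≤ n) :
    (n - t - 1).choose (k1 - t - 1) *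
        ((t + 1) * (n - t - 1).choose (k2 - t) + (n - t - 1).choose (k2 - t - 1)) <
      ((n - t).choose (k1 - t) - (n - k2 - 1).choose (k1 - t)) *
        ((n - t).choose (k2 - t) + t) := by
  have hmax : max (t + 1) (k2 - t) = k2 - t := max_eq_right (by omega)
  rw [hmax] at hn
  obtain ⟨b, hb⟩ : ∃ b, k2 - t = b := ⟨_, rfl⟩
  obtain ⟨a, ha⟩ : ∃ a, k1 - t = a := ⟨_, rfl⟩
  obtain ⟨m, hm⟩ : ∃ m, n - t = m := ⟨_, rfl⟩
  rw [hb, ha] at hn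
  obtain ⟨P, hP⟩ : ∃ P, b * (t + 1) * (a + 1) * (b + 1) = P := ⟨_, rfl⟩
  rw [hP] at hn
  have hbt : t + 1 ≤ b := by omega
  have hab : b ≤ a := by omega
  have hmP : P + 1 ≤ m := by omega
  -- the numeric condition
  obtain ⟨c, hc⟩ : ∃ c, b + a - 2 = c := ⟨_, rfl⟩
  have hc2 : c + 2 = b + a := by omega
  obtain ⟨X, hX⟩ : ∃ X, (t + 2) * b * c = X := ⟨_, rfl⟩
  have hPbig : X + c + 2 ≤ P + 1 := by
    rw [← hX]
    exact arith t b a c P ht hbt hab hc2 hP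
  have hmbig : X + c + 2 ≤ m := by omega
  -- rewrite the goal
  have e1 : n - t - 1 = m - 1 := by omega
  have e2 : k1 - t - 1 = a - 1 := by omega
  have e3 : n - k2 - 1 = m - b - 1 := by omega
  have e4 : k2 - t - 1 = b - 1 := by omega
  rw [e1, e2, e3, e4, ha, hb, hm]
  obtain ⟨r, hr⟩ : ∃ r, a = r + 1 := ⟨a - 1, by omega⟩
  obtain ⟨q, hq⟩ : ∃ q, m - b - 1 = q := ⟨_, rfl⟩
  have hrq : r ≤ q := by omega
  have hmq : m = q + b + 1 := by omega
  have e5 : a - 1 = r := by omega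
  obtain ⟨b1, hb1⟩ : ∃ b1, b = b1 + 1 := ⟨b - 1, by omega⟩
  have e6 : b - 1 = b1 := by omega
  have e7 : m - 1 = q + b := by omega
  rw [e5, e6, e7, hq, hr, hmq]
  -- key facts
  have F1 : q.choose (r+1) + (b+1) * q.choose r ≤ (q+b+1).choose (r+1) := by
    have := key1 (q+b+1) r (b+1) (by omega)
    have hqq : q + b + 1 - (b + 1) = q := by omega
    rwa [hqq] at this
  have F2 : (q+b+1).choose b = (q+b).choose b1 + (q+b).choose b := by
    have h := Nat.choose_succ_succ' (q+b) b1
    rw [← hb1] at h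
    exact h
  have Fcore : (t+1) * (q+b).choose r ≤ (b+1) * q.choose r := by
    have hcnd : (t+2) * b * (b + r - 1) ≤ q + 1 - r := by
      rw [show b + r - 1 = c from by omega, hX]; omega
    have h1 := core q r b t hrq hcnd
    have h2 : (t+2) * q.choose r ≤ (b+1) * q.choose r :=
      Nat.mul_le_mul_right _ (by omega)
    omega
  obtain ⟨S, hS⟩ : ∃ S, (b+1) * q.choose r = S := ⟨_, rfl⟩
  rw [hS] at F1 Fcore
  have hSpos : 0 < S := by
    rw [← hS]
    exact Nat.mul_pos (by omega) (Nat.choose_pos hrq)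
  have hD : S ≤ (q+b+1).choose (r+1) - q.choose (r+1) := by omega
  have hDpos : 0 < (q+b+1).choose (r+1) - q.choose (r+1) := by omega
  -- assemble
  have LHSb : (q+b).choose r * ((t+1) * (q+b).choose b + (q+b).choose b1)
      ≤ (q+b).choose r * ((t+1) * (q+b+1).choose b) := by
    apply Nat.mul_le_mul_left
    rw [F2, Nat.mul_add]
    have h5 : (q+b).choose b1 ≤ (t+1) * (q+b).choose b1 :=
      Nat.le_mul_of_pos_left _ (by omega)
    omega
  calc (q+b).choose r * ((t+1) * (q+b).choose b + (q+b).choose b1)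
      ≤ (q+b).choose r * ((t+1) * (q+b+1).choose b) := LHSb
    _ = ((t+1) * (q+b).choose r) * (q+b+1).choose b := by ring
    _ ≤ S * (q+b+1).choose b := Nat.mul_le_mul_right _ Fcore
    _ ≤ ((q+b+1).choose (r+1) - q.choose (r+1)) * (q+b+1).choose b :=
        Nat.mul_le_mul_right _ hD
    _ < ((q+b+1).choose (r+1) - q.choose (r+1)) * ((q+b+1).choose b + t) := by
        have hDt : 0 < ((q+b+1).choose (r+1) - q.choose (r+1)) * t :=
          Nat.mul_pos hDpos ht
        have : ((q+b+1).choose (r+1) - q.choose (r+1)) * ((q+b+1).choose b + t)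
            = ((q+b+1).choose (r+1) - q.choose (r+1)) * (q+b+1).choose b
              + ((q+b+1).choose (r+1) - q.choose (r+1)) * t := by ring
        omega
end

section
/- For positive integers n, k_1, k_2, t with k_1 ≥ k_2, k_2 = t+1, (k_1,t) ∉ {(2,1),(3,1),(4,1)}, and n ≥ max{t+1, k_2-t}·(t+1)(k_1-t+1)(k_2-t+1)+t+1, one has g_2(k_1,k_2,n,t) > g_1(k_1,k_2,n,t), where g_1 = (binom(n-t,k_1-t) - binom(n-k_2-1,k_1-t))·(binom(n-t,k_2-t)+t) and g_2 = binom(n-t-1,k_1-t-1)·((t+1)·binom(n-t-1,k_2-t) + binom(n-t-1,k_2-t-1)). -/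
set_option maxHeartbeats 1000000 in
/-- For `k_1 ≥ k_2 = t+1` with `(k_1,t) ∉ {(2,1),(3,1),(4,1)}`,
`g_2(k_1,k_2,n,t) > g_1(k_1,k_2,n,t)`. -/
theorem stmt_16 (n k1 k2 t : ℕ) (ht : 0 < t) (hk2 : k2 = t + 1) (hk12 : k2 ≤ k1)
    (hex1 : ¬ (k1 = 2 ∧ t = 1)) (hex2 : ¬ (k1 = 3 ∧ t = 1))
    (hex3 : ¬ (k1 = 4 ∧ t = 1))
    (hn : max (t + 1) (k2 - t) * (t + 1) * (k1 - t + 1) * (k2 - t + 1) + t + 1 ≤ n) :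
    ((n - t).choose (k1 - t) - (n - k2 - 1).choose (k1 - t)) *
        ((n - t).choose (k2 - t) + t) <
      (n - t - 1).choose (k1 - t - 1) *
        ((t + 1) * (n - t - 1).choose (k2 - t) + (n - t - 1).choose (k2 - t - 1)) := by
  subst hk2
  obtain ⟨m, rfl⟩ : ∃ m, k1 = m + 1 + t := ⟨k1 - t - 1, by omega⟩
  -- simplify hn
  have hn' : 2 * (t + 1) * (t + 1) * (m + 2) + t + 1 ≤ n := by
    have h1 : max (t + 1) (t + 1 - t) = t + 1 := by omega
    have h2 : m + 1 + t - t + 1 = m + 2 := by omega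
    have h3 : t + 1 - t + 1 = 2 := by omega
    rw [h1, h2, h3] at hn
    linarith [hn]
  have h0 : 0 < 2 * (t + 1) * (t + 1) * (m + 2) := by positivity
  have hn2 : t + 2 ≤ n := by linarith [hn', h0]
  obtain ⟨b, rfl⟩ : ∃ b, n = b + t + 2 := ⟨n - t - 2, by omega⟩
  have hb : 2 * (t + 1) * (t + 1) * (m + 2) ≤ b + 1 := by linarith [hn']
  have hmb : m ≤ b := by
    have h0 : 0 < 2 * (t + 1) * (t + 1) := by positivity
    have h1 : 1 * (m + 2) ≤ 2 * (t + 1) * (t + 1) * (m + 2) :=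
      Nat.mul_le_mul_right _ h0
    linarith [h1, hb]
  -- rewrite all subtraction arguments
  have e1 : b + t + 2 - t = b + 2 := by omega
  have e2 : m + 1 + t - t = m + 1 := by omega
  have e3 : b + t + 2 - (t + 1) - 1 = b := by omega
  have e4 : b + t + 2 - t - 1 = b + 1 := by omega
  have e5 : m + 1 + t - t - 1 = m := by omega
  have e6 : t + 1 - t = 1 := by omega
  have e7 : t + 1 - t - 1 = 0 := by omega
  rw [e4, e5, e3, e1, e2, e7, e6]
  simp only [Nat.choose_one_right, Nat.choose_zero_right]
  have hP : (b + 2).choose (m + 1) = (b + 1).choose m + (b.choose m + b.choose (m + 1)) := by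
    rw [show b + 2 = (b+1) + 1 from rfl, Nat.choose_succ_succ (b+1) m,
      Nat.choose_succ_succ b m]
  rw [hP]
  have hD : (b + 1).choose m + (b.choose m + b.choose (m + 1)) - b.choose (m + 1)
      = (b + 1).choose m + b.choose m := by omega
  rw [hD]
  set A := (b + 1).choose m with hA
  set B := b.choose m with hB
  have key : B * (b + 2 + t) < A * (t * b) := by
    rcases Nat.lt_or_ge t 2 with ht2 | ht2
    · -- t = 1
      have ht1 : t = 1 := by omega
      subst ht1
      have hm3 : 3 ≤ m := by
        rcases Nat.lt_or_ge m 3 with h | h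
        · interval_cases m <;> simp_all
        · exact h
      obtain ⟨i, rfl⟩ : ∃ i, m = i + 1 := ⟨m - 1, by omega⟩
      have hAe : A = b.choose i + B := by
        rw [hA, hB, Nat.choose_succ_succ b i]
      have hid : B * (i + 1) = b.choose i * (b - i) := by
        rw [hB]; exact Nat.choose_succ_right_eq b i
      have hCpos : 0 < b.choose i := Nat.choose_pos (by omega)
      have h3B : 3 * B < b.choose i * b := by
        calc 3 * B ≤ B * (i + 1) := by nlinarith
          _ = b.choose i * (b - i) := hid
          _ < b.choose i * b :=
              mul_lt_mul_of_pos_left (by omega) hCpos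
      calc B * (b + 2 + 1) = B * b + 3 * B := by ring
        _ < B * b + b.choose i * b := by omega
        _ = (b.choose i + B) * (1 * b) := by ring
        _ = A * (1 * b) := by rw [hAe]
    · -- t ≥ 2
      have hBA : B ≤ A := Nat.choose_le_choose m (by omega)
      have hBpos : 0 < B := Nat.choose_pos hmb
      have hlt : b + 2 + t < t * b := by
        have h4 : 2 * (t + 1) * (t + 1) * 2 ≤ 2 * (t + 1) * (t + 1) * (m + 2) :=
          Nat.mul_le_mul_left _ (by omega)
        have h5 : 2 * b ≤ t * b := Nat.mul_le_mul_right b ht2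
        have h6 : 4 * (t + 1) * (t + 1) ≤ b + 1 := by linarith [h4, hb]
        have h8 : t * 1 ≤ t * t := Nat.mul_le_mul_left t ht
        have h7 : t + 3 ≤ b := by nlinarith [h6, h8]
        linarith [h5, h7]
      calc B * (b + 2 + t) < B * (t * b) := mul_lt_mul_of_pos_left hlt hBpos
        _ ≤ A * (t * b) := Nat.mul_le_mul_right _ hBA
  calc (A + B) * (b + 2 + t) = A * (b + 2 + t) + B * (b + 2 + t) := by ring
    _ < A * (b + 2 + t) + A * (t * b) := by omega
    _ = A * ((t + 1) * (b + 1) + 1) := by ring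
end

section
/- For positive integers n, k_1, k_2, t with k_1 > k_2 ≥ t+1 and n ≥ max{t+1, k_2-t}·(t+1)(k_1-t+1)(k_2-t+1)+t+1, one has g_1(k_1,k_2,n,t) > g_1(k_2,k_1,n,t), where g_1(k,ℓ,n,t) = (binom(n-t,k-t) - binom(n-ℓ-1,k-t))·(binom(n-t,ℓ-t)+t). -/
open Nat

lemma fact_le_pow_pred : ∀ n : ℕ, n ! ≤ n ^ (n - 1)
  | 0 => by simp
  | 1 => by simp
  | (m + 2) => by
    calc (m + 2)! = (m + 2) * (m + 1)! := rfl
      _ ≤ (m + 2) * (m + 1) ^ m := Nat.mul_le_mul_left _ (fact_le_pow_pred (m + 1))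
      _ ≤ (m + 2) * (m + 2) ^ m := Nat.mul_le_mul_left _ (Nat.pow_le_pow_left (by omega) _)
      _ = (m + 2) ^ (m + 1) := (pow_succ' _ _).symm

set_option maxHeartbeats 1600000 in
/-- For `k_1 > k_2 ≥ t+1`, `g_1(k_1,k_2,n,t) > g_1(k_2,k_1,n,t)`. -/
theorem stmt_17 (n k1 k2 t : ℕ) (ht : 0 < t) (hk2 : t + 1 ≤ k2) (hk12 : k2 < k1)
    (hn : max (t + 1) (k2 - t) * (t + 1) * (k1 - t + 1) * (k2 - t + 1) + t + 1 ≤ n) :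
    ((n - t).choose (k2 - t) - (n - k1 - 1).choose (k2 - t)) *
        ((n - t).choose (k1 - t) + t) <
      ((n - t).choose (k1 - t) - (n - k2 - 1).choose (k1 - t)) *
        ((n - t).choose (k2 - t) + t) := by
  obtain ⟨a, ha2, hk1e⟩ : ∃ a, 2 ≤ a ∧ k1 = t + a := ⟨k1 - t, by omega, by omega⟩
  obtain ⟨b, hb1, hba, hk2e⟩ : ∃ b, 1 ≤ b ∧ b < a ∧ k2 = t + b :=
    ⟨k2 - t, by omega, by omega, by omega⟩
  obtain ⟨N, hNdef⟩ : ∃ N, n - t = N := ⟨n - t, rfl⟩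
  rw [show k1 - t = a by omega, show k2 - t = b by omega] at hn ⊢
  rw [hNdef, show n - k1 - 1 = N - (a + 1) by omega, show n - k2 - 1 = N - (b + 1) by omega]
  -- numeric bounds on N
  have h5 : (t + 1) * (t + 1) * (a + 1) * (b + 1) + t + 1 ≤ n := by
    refine le_trans ?_ hn
    gcongr
    exact le_max_left _ _
  have hNbig : (t + 1) * (t + 1) * (a + 1) * (b + 1) + 1 ≤ N := by
    have := Nat.le_sub_of_add_le
      (show (t + 1) * (t + 1) * (a + 1) * (b + 1) + 1 + t ≤ n by omega)
    rwa [hNdef] at this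
  have hstep : 4 * ((t + 1) * (a + 1)) ≤ (t + 1) * (t + 1) * (a + 1) * (b + 1) := by
    calc 4 * ((t + 1) * (a + 1)) = (2 * (t + 1) * (a + 1)) * 2 := by ring
      _ ≤ ((t + 1) * (t + 1) * (a + 1)) * (b + 1) := by
          have h2t : 2 ≤ t + 1 := by omega
          have h2b : 2 ≤ b + 1 := by omega
          exact Nat.mul_le_mul (by gcongr) h2b
  have hta : 2 * t * a + a + b + 2 ≤ N := by
    have hx : 4 * ((t + 1) * (a + 1)) = 4 * (t * a) + 4 * t + 4 * a + 4 := by ring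
    have hy : 2 * t * a = 2 * (t * a) := by ring
    linarith [hNbig, hstep, hx, hy, hba]
  -- abbreviations
  set P := N.descFactorial a with hP
  set Q := N.descFactorial b with hQ
  set P' := (N - (b + 1)).descFactorial a with hP'
  set Q' := (N - (a + 1)).descFactorial b with hQ'
  set D := N.descFactorial (a + b + 1) with hD
  set F := (N - b - 1 - 1).descFactorial (a - 1) with hF
  -- identities
  have id1 : Q' * ((N - a) * P) = D := by
    have t1 := Nat.descFactorial_mul_descFactorial (n := N) (k := a + 1) (m := a + b + 1)
      (by omega)
    rwa [show a + b + 1 - (a + 1) = b by omega, Nat.descFactorial_succ] at t1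
  have id2 : P' * ((N - b) * Q) = D := by
    have t2 := Nat.descFactorial_mul_descFactorial (n := N) (k := b + 1) (m := a + b + 1)
      (by omega)
    rwa [show a + b + 1 - (b + 1) = a by omega, Nat.descFactorial_succ] at t2
  have id3 : (F * (N - b - 1)) * ((N - b) * Q) = D := by
    have t3 := Nat.descFactorial_mul_descFactorial (n := N) (k := b) (m := a + b + 1)
      (by omega)
    rw [show a + b + 1 - b = a + 1 by omega] at t3
    have t4 := Nat.descFactorial_mul_descFactorial (n := N - b) (k := 1) (m := a + 1)
      (by omega)
    rw [Nat.descFactorial_one, show a + 1 - 1 = a by omega] at t4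
    have t5 := Nat.descFactorial_mul_descFactorial (n := N - b - 1) (k := 1) (m := a)
      (by omega)
    rw [Nat.descFactorial_one] at t5
    calc (F * (N - b - 1)) * ((N - b) * Q)
        = (((N - b - 1).descFactorial a) * (N - b)) * Q := by rw [← t5]; ring
      _ = ((N - b).descFactorial (a + 1)) * Q := by rw [← t4]
      _ = D := t3
  -- the key estimate  t * a! < F
  have hFbig : t * a ! < F := by
    have hpow := Nat.pow_sub_le_descFactorial (N - b - 1 - 1) (a - 1)
    rw [show N - b - 1 - 1 + 1 - (a - 1) = N - a - b by omega] at hpow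
    have h2 : (2 * t * a) ^ (a - 1) ≤ (N - a - b) ^ (a - 1) :=
      Nat.pow_le_pow_left (by omega) _
    have h3 : t * a ! < (2 * t * a) ^ (a - 1) := by
      have hfle : a ! ≤ a ^ (a - 1) := fact_le_pow_pred a
      have hpos : 0 < t * a ! := Nat.mul_pos ht (Nat.factorial_pos a)
      calc t * a ! < 2 * (t * a !) := by omega
        _ ≤ 2 * (t * a ^ (a - 1)) := by gcongr
        _ = (2 * t) * a ^ (a - 1) := by ring
        _ ≤ (2 * t) ^ (a - 1) * a ^ (a - 1) :=
            Nat.mul_le_mul_right _ (Nat.le_self_pow (by omega) _)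
        _ = (2 * t * a) ^ (a - 1) := (mul_pow _ _ _).symm
    exact lt_of_lt_of_le (lt_of_lt_of_le h3 h2) hpow
  -- positivity
  have hQpos : 0 < Q := by
    rcases Nat.eq_zero_or_pos Q with h | h
    · exact absurd (Nat.descFactorial_eq_zero_iff_lt.mp h) (by omega)
    · exact h
  have hNbQpos : 0 < (N - b) * Q := Nat.mul_pos (by omega) hQpos
  -- the multiplied key inequality
  have key1 : (N - a) * (N - b) * ((Q - Q') * (t * a !) + P' * Q)
      < (N - a) * (N - b) * (Q' * P) := by
    have hlt : (N - a) * (t * a !) < (N - b - 1) * F := by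
      calc (N - a) * (t * a !) ≤ (N - b - 1) * (t * a !) :=
            Nat.mul_le_mul_right _ (by omega)
        _ < (N - b - 1) * F := by
            exact Nat.mul_lt_mul_of_pos_left hFbig (by omega)
    calc (N - a) * (N - b) * ((Q - Q') * (t * a !) + P' * Q)
        ≤ (N - a) * (N - b) * (Q * (t * a !) + P' * Q) := by
          gcongr
          exact Nat.sub_le _ _
      _ = (N - a) * (t * a !) * ((N - b) * Q) + (N - a) * (P' * ((N - b) * Q)) := by ring
      _ = (N - a) * (t * a !) * ((N - b) * Q) + (N - a) * D := by rw [id2]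
      _ < (N - b - 1) * F * ((N - b) * Q) + (N - a) * D := by
          exact Nat.add_lt_add_right (Nat.mul_lt_mul_of_pos_right hlt hNbQpos) _
      _ = D + (N - a) * D := by rw [show (N - b - 1) * F = F * (N - b - 1) by ring, id3]
      _ ≤ (a - b) * D + (N - a) * D := by
          have : 1 * D ≤ (a - b) * D := Nat.mul_le_mul_right _ (by omega)
          omega
      _ = ((a - b) + (N - a)) * D := (Nat.add_mul _ _ _).symm
      _ = (N - b) * D := by rw [show (a - b) + (N - a) = N - b by omega]
      _ = (N - b) * (Q' * ((N - a) * P)) := by rw [id1]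
      _ = (N - a) * (N - b) * (Q' * P) := by ring
  have h1 : (Q - Q') * (t * a !) + P' * Q < Q' * P := Nat.lt_of_mul_lt_mul_left key1
  -- monotonicity facts
  have hYle : (N - (a + 1)).choose b ≤ N.choose b := Nat.choose_le_choose b (by omega)
  have hXle : (N - (b + 1)).choose a ≤ N.choose a := Nat.choose_le_choose a (by omega)
  have hQ'le : Q' ≤ Q := by
    rw [hQ, hQ', Nat.descFactorial_eq_factorial_mul_choose,
      Nat.descFactorial_eq_factorial_mul_choose]
    exact Nat.mul_le_mul_left _ hYle
  have hP'le : P' ≤ P := by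
    rw [hP, hP', Nat.descFactorial_eq_factorial_mul_choose,
      Nat.descFactorial_eq_factorial_mul_choose]
    exact Nat.mul_le_mul_left _ hXle
  -- pass to ℤ
  zify [hYle, hXle]
  have h1z : ((Q : ℤ) - Q') * (t * a !) + P' * Q < Q' * P := by
    zify [hQ'le] at h1
    convert h1 using 2
  have h2z : (P' : ℤ) * (t * b !) ≤ P * (t * b !) := by
    have := Nat.mul_le_mul_right (t * b !) hP'le
    exact_mod_cast this
  have hQe : (Q : ℤ) = (b ! : ℤ) * (N.choose b : ℤ) := by
    rw [hQ]; exact_mod_cast congrArg (Nat.cast (R := ℤ))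
      (Nat.descFactorial_eq_factorial_mul_choose N b)
  have hQ'e : (Q' : ℤ) = (b ! : ℤ) * ((N - (a + 1)).choose b : ℤ) := by
    rw [hQ']; exact_mod_cast congrArg (Nat.cast (R := ℤ))
      (Nat.descFactorial_eq_factorial_mul_choose _ b)
  have hPe : (P : ℤ) = (a ! : ℤ) * (N.choose a : ℤ) := by
    rw [hP]; exact_mod_cast congrArg (Nat.cast (R := ℤ))
      (Nat.descFactorial_eq_factorial_mul_choose N a)
  have hP'e : (P' : ℤ) = (a ! : ℤ) * ((N - (b + 1)).choose a : ℤ) := by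
    rw [hP']; exact_mod_cast congrArg (Nat.cast (R := ℤ))
      (Nat.descFactorial_eq_factorial_mul_choose _ a)
  rw [hQe, hQ'e, hPe, hP'e] at h1z
  rw [hPe, hP'e] at h2z
  refine lt_of_mul_lt_mul_right ?_ (show (0 : ℤ) ≤ (a ! : ℤ) * (b ! : ℤ) by positivity)
  linarith [h1z, h2z]
end

section
/- For positive integers n, k_1, k_2, t with k_1 ≥ k_2 ≥ t+1 and n ≥ max{t+1, k_2-t}·(t+1)(k_1-t+1)(k_2-t+1)+t+1, one has g_1(k_1,k_2,n,t) > g_5(k_1,k_2,n,t), where g_1 = (binom(n-t,k_1-t) - binom(n-k_2-1,k_1-t))·(binom(n-t,k_2-t)+t) and g_5 = (t+1)²(k_1-t+1)(k_2-t+1)·binom(n-t-1,k_1-t-1)·binom(n-t-1,k_2-t-1). -/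
/-- Weierstrass-type product bound for descending factorials. -/
lemma desc_ratio (d : ℕ) : ∀ (r N V : ℕ), V + r * (d + 1) ≤ N + 1 →
    V * N.descFactorial r ≤ (V + r * d) * (N - d).descFactorial r := by
  intro r
  induction r with
  | zero => intro N V h; simp
  | succ r ih =>
    intro N V h
    have e1 : (r + 1) * (d + 1) = r * d + r + d + 1 := by ring
    have e2 : (r + 1) * d = r * d + d := by ring
    have e3 : r * (d + 1) = r * d + r := by ring
    have hN : d + r ≤ N := by omega
    have hW : V + r * d ≤ N - d - r := by omega
    have ih' := ih N V (by omega)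
    rw [Nat.descFactorial_succ, Nat.descFactorial_succ]
    have key : (N - r) * (V + r * d) ≤ (N - d - r) * (V + (r + 1) * d) := by
      have hNr : N - r = (N - d - r) + d := by omega
      rw [hNr, e2]
      set W := N - d - r
      nlinarith [hW]
    calc V * ((N - r) * N.descFactorial r)
        = (N - r) * (V * N.descFactorial r) := by ring
      _ ≤ (N - r) * ((V + r * d) * (N - d).descFactorial r) :=
          Nat.mul_le_mul_left _ ih'
      _ = ((N - r) * (V + r * d)) * (N - d).descFactorial r := by ring
      _ ≤ ((N - d - r) * (V + (r + 1) * d)) * (N - d).descFactorial r :=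
          Nat.mul_le_mul_right _ key
      _ = (V + (r + 1) * d) * ((N - d - r) * (N - d).descFactorial r) := by ring

lemma choose_add_le (N s : ℕ) : ∀ j, N.choose (s + 1) + j * N.choose s ≤ (N + j).choose (s + 1) := by
  intro j
  induction j with
  | zero => simp
  | succ j ih =>
    have e : N + (j + 1) = (N + j) + 1 := by omega
    rw [e, Nat.choose_succ_succ]
    have h1 : N.choose s ≤ (N + j).choose s := Nat.choose_le_choose s (by omega)
    have e2 : (j + 1) * N.choose s = j * N.choose s + N.choose s := by ring
    simp only [Nat.succ_eq_add_one] at *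
    omega

/-- For `k_1 ≥ k_2 ≥ t+1`, `g_1(k_1,k_2,n,t) > g_5(k_1,k_2,n,t)`. -/
theorem stmt_19 (n k1 k2 t : ℕ) (ht : 0 < t) (hk2 : t + 1 ≤ k2) (hk12 : k2 ≤ k1)
    (hn : max (t + 1) (k2 - t) * (t + 1) * (k1 - t + 1) * (k2 - t + 1) + t + 1 ≤ n) :
    (t + 1) ^ 2 * (k1 - t + 1) * (k2 - t + 1) *
        (n - t - 1).choose (k1 - t - 1) * (n - t - 1).choose (k2 - t - 1) <
      ((n - t).choose (k1 - t) - (n - k2 - 1).choose (k1 - t)) *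
        ((n - t).choose (k2 - t) + t) := by
  set a := k1 - t with ha
  set b := k2 - t with hb
  set m := n - t with hm
  set mx := max (t + 1) b with hmx
  have hb1 : 1 ≤ b := by omega
  have ha1 : b ≤ a := by omega
  have hmxt : t + 1 ≤ mx := le_max_left _ _
  have hmxb : b ≤ mx := le_max_right _ _
  set M := mx * (t + 1) * (a + 1) * (b + 1) with hM
  have hmM : M + 1 ≤ m := by omega
  -- key size bound: b(t+1)²(a+1) + (a-1)(b+1) < m
  have hsize : b * (t + 1) ^ 2 * (a + 1) + (a - 1) * (b + 1) < m := by
    have h1 : b * (t + 1) ^ 2 * (a + 1) ≤ mx * (t + 1) * (a + 1) * b := by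
      have : b * (t + 1) ^ 2 * (a + 1) = (b * (t + 1)) * ((t + 1) * (a + 1)) := by ring
      rw [this]
      have : mx * (t + 1) * (a + 1) * b = (b * mx) * ((t + 1) * (a + 1)) := by ring
      rw [this]
      exact Nat.mul_le_mul_right _ (Nat.mul_le_mul_left _ hmxt)
    have h2 : (a - 1) * (b + 1) ≤ mx * (t + 1) * (a + 1) := by
      calc (a - 1) * (b + 1) ≤ (a + 1) * (mx * (t + 1)) := by
            refine Nat.mul_le_mul (by omega) ?_
            nlinarith
        _ = mx * (t + 1) * (a + 1) := by ring
    have hMeq : M = mx * (t + 1) * (a + 1) * b + mx * (t + 1) * (a + 1) := by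
      rw [hM]; ring
    omega
  -- core inequality A on descFactorials, via desc_ratio
  set C0 := b * (t + 1) ^ 2 * (a + 1) with hC0
  have hC0pos : 0 < C0 := by positivity
  have hC0big : a + b + 1 ≤ C0 := by
    have ha0 : 1 ≤ a := le_trans hb1 ha1
    rw [hC0]
    have h2 : 2 ≤ t + 1 := by omega
    have h4 : 4 ≤ (t + 1) ^ 2 := by
      calc 4 = 2 ^ 2 := rfl
        _ ≤ (t + 1) ^ 2 := Nat.pow_le_pow_left h2 2
    have step1 : b * 4 * (a + 1) ≤ b * (t + 1) ^ 2 * (a + 1) :=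
      Nat.mul_le_mul_right _ (Nat.mul_le_mul_left _ h4)
    have hab' : a ≤ a * b := Nat.le_mul_of_pos_right a hb1
    have e : b * 4 * (a + 1) = 4 * (a * b) + 4 * b := by ring
    omega
  set V := m - (a - 1) * (b + 1) with hV
  have hab : (a - 1) * (b + 1) = (a - 1) * b + (a - 1) := by ring
  have hVpos : C0 < V := by omega
  have hratio := desc_ratio b (a - 1) (m - 1) V (by omega)
  have hVd : V + (a - 1) * b = m - (a - 1) := by omega
  have hm1b : m - 1 - b = m - b - 1 := by omega
  rw [hVd, hm1b] at hratio
  -- A' : C0 * desc(m-1, a-1) < m * desc(m-b-1, a-1)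
  have hD2pos : 0 < (m - b - 1).descFactorial (a - 1) := by
    rw [Nat.descFactorial_eq_factorial_mul_choose]
    exact Nat.mul_pos (Nat.factorial_pos _) (Nat.choose_pos (by omega))
  have hnum : C0 * (m - (a - 1)) < m * V := by
    calc C0 * (m - (a - 1)) ≤ C0 * m := Nat.mul_le_mul_left _ (by omega)
      _ < V * m := mul_lt_mul_of_pos_right hVpos (by omega)
      _ = m * V := by ring
  have hA' : C0 * (m - 1).descFactorial (a - 1) < m * (m - b - 1).descFactorial (a - 1) := by
    have : V * (C0 * (m - 1).descFactorial (a - 1)) < V * (m * (m - b - 1).descFactorial (a - 1)) := by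
      calc V * (C0 * (m - 1).descFactorial (a - 1))
          = C0 * (V * (m - 1).descFactorial (a - 1)) := by ring
        _ ≤ C0 * ((m - (a - 1)) * (m - b - 1).descFactorial (a - 1)) :=
            Nat.mul_le_mul_left _ hratio
        _ = (C0 * (m - (a - 1))) * (m - b - 1).descFactorial (a - 1) := by ring
        _ < (m * V) * (m - b - 1).descFactorial (a - 1) :=
            mul_lt_mul_of_pos_right hnum hD2pos
        _ = V * (m * (m - b - 1).descFactorial (a - 1)) := by ring
    exact Nat.lt_of_mul_lt_mul_left this
  -- A : on binomials
  have hA : C0 * (m - 1).choose (a - 1) < m * (m - b - 1).choose (a - 1) := by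
    rw [Nat.descFactorial_eq_factorial_mul_choose, Nat.descFactorial_eq_factorial_mul_choose] at hA'
    have key : Nat.factorial (a - 1) * (C0 * (m - 1).choose (a - 1)) <
        Nat.factorial (a - 1) * (m * (m - b - 1).choose (a - 1)) := by
      calc Nat.factorial (a - 1) * (C0 * (m - 1).choose (a - 1))
          = C0 * (Nat.factorial (a - 1) * (m - 1).choose (a - 1)) := by ring
        _ < m * (Nat.factorial (a - 1) * (m - b - 1).choose (a - 1)) := hA'
        _ = Nat.factorial (a - 1) * (m * (m - b - 1).choose (a - 1)) := by ring
    exact Nat.lt_of_mul_lt_mul_left key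
  -- Step 1: C(m,a) - C(m-b-1,a) ≥ (b+1) * C(m-b-1,a-1)
  have hstep1 : (b + 1) * (m - b - 1).choose (a - 1) ≤ m.choose a - (m - b - 1).choose a := by
    have h := choose_add_le (m - b - 1) (a - 1) (b + 1)
    have e1 : (m - b - 1) + (b + 1) = m := by omega
    have e2 : a - 1 + 1 = a := by omega
    rw [e1, e2] at h
    omega
  -- Step 2: m * C(m-1, b-1) = C(m, b) * b
  have hstep2 : m * (m - 1).choose (b - 1) = m.choose b * b := by
    have h := Nat.add_one_mul_choose_eq (m - 1) (b - 1)
    have e1 : m - 1 + 1 = m := by omega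
    have e2 : b - 1 + 1 = b := by omega
    rw [e1, e2] at h
    exact h
  have hCmb : 0 < m.choose b := Nat.choose_pos (by omega)
  -- rewrite goal in terms of a, b, m
  have g1 : n - t - 1 = m - 1 := by omega
  have g2 : k1 - t - 1 = a - 1 := rfl
  have g3 : k2 - t - 1 = b - 1 := rfl
  have g4 : n - k2 - 1 = m - b - 1 := by omega
  rw [g1, g4]
  show (t + 1) ^ 2 * (a + 1) * (b + 1) * (m - 1).choose (a - 1) * (m - 1).choose (b - 1) <
      (m.choose a - (m - b - 1).choose a) * (m.choose b + t)
  -- final assembly: multiply by b*m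
  have main : (b * m) * ((t + 1) ^ 2 * (a + 1) * (b + 1) * (m - 1).choose (a - 1) * (m - 1).choose (b - 1)) <
      (b * m) * (((b + 1) * (m - b - 1).choose (a - 1)) * m.choose b) := by
    have lhs_eq : (b * m) * ((t + 1) ^ 2 * (a + 1) * (b + 1) * (m - 1).choose (a - 1) * (m - 1).choose (b - 1))
        = (b + 1) * (C0 * (m - 1).choose (a - 1)) * (m * (m - 1).choose (b - 1)) := by
      rw [hC0]; ring
    have rhs_eq : (b * m) * (((b + 1) * (m - b - 1).choose (a - 1)) * m.choose b)
        = (b + 1) * (m * (m - b - 1).choose (a - 1)) * (m.choose b * b) := by ring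
    rw [lhs_eq, rhs_eq, hstep2]
    have h1 : (b + 1) * (C0 * (m - 1).choose (a - 1)) < (b + 1) * (m * (m - b - 1).choose (a - 1)) :=
      mul_lt_mul_of_pos_left hA (by omega)
    exact mul_lt_mul_of_pos_right h1 (by positivity)
  have hle : (b * m) * (((b + 1) * (m - b - 1).choose (a - 1)) * m.choose b) ≤
      (b * m) * ((m.choose a - (m - b - 1).choose a) * (m.choose b + t)) := by
    refine Nat.mul_le_mul_left _ (Nat.mul_le_mul hstep1 (by omega))
  exact Nat.lt_of_mul_lt_mul_left (lt_of_lt_of_le main hle)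
end
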